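/- arXiv:2407.13399 — 10 statements merged into one kernel-verified Lean document; each statement's English description precedes it below -/
import Mathlib

section
/- Let A be a finite nonempty set, let πref and π be probability distributions on A with πref(a) > 0 and π(a) > 0 for all a ∈ A, let β > 0 and Rmax ≥ 1, let r : A → [0, Rmax], and suppose there exists Z ∈ ℝ such that r(a) = β·(π(a)/πref(a) + log(π(a)/πref(a))) + Z for all a ∈ A. Then −β ≤ Z ≤ Rmax. -/
/-- Bound on the normalization constant of the optimal policy under mixed
`χ²`-regularization: if `r(a) = β·(π(a)/πref(a) + log(π(a)/πref(a))) + Z` for all `a`,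
with `r` taking values in `[0, Rmax]`, then `-β ≤ Z ≤ Rmax`. -/
theorem normalization_constant_bound {A : Type*} [Fintype A] [Nonempty A]
    (pref p : A → ℝ) (hpref : ∀ a, 0 < pref a) (hp : ∀ a, 0 < p a)
    (hprefsum : ∑ a, pref a = 1) (hpsum : ∑ a, p a = 1)
    (β Rmax : ℝ) (hβ : 0 < β) (hR : 1 ≤ Rmax)
    (r : A → ℝ) (hr : ∀ a, r a ∈ Set.Icc (0 : ℝ) Rmax)
    (Z : ℝ)
    (hZ : ∀ a, r a = β * (p a / pref a + Real.log (p a / pref a)) + Z) :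
    -β ≤ Z ∧ Z ≤ Rmax := by
  constructor
  · -- find a with p a ≤ pref a
    by_contra h
    push_neg at h
    have hall : ∀ a, pref a < p a := by
      intro a
      by_contra hc
      push_neg at hc
      -- p a ≤ pref a, so ratio ≤ 1
      have hratio : p a / pref a ≤ 1 := (div_le_one (hpref a)).mpr hc
      have hpos : 0 < p a / pref a := div_pos (hp a) (hpref a)
      have hlog : Real.log (p a / pref a) ≤ p a / pref a - 1 :=
        Real.log_le_sub_one_of_pos hpos
      have hphi : p a / pref a + Real.log (p a / pref a) ≤ 1 := by
        nlinarith
      have := hZ a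
      have hr0 := (hr a).1
      nlinarith [mul_le_mul_of_nonneg_left hphi hβ.le]
    have : ∑ a, pref a < ∑ a, p a :=
      Finset.sum_lt_sum_of_nonempty Finset.univ_nonempty (fun a _ => hall a)
    rw [hprefsum, hpsum] at this
    exact lt_irrefl 1 this
  · by_contra h
    push_neg at h
    have hall : ∀ a, p a < pref a := by
      intro a
      by_contra hc
      push_neg at hc
      have hratio : 1 ≤ p a / pref a := (one_le_div (hpref a)).mpr hc
      have hlog : 0 ≤ Real.log (p a / pref a) := Real.log_nonneg hratio
      have hphi : 1 ≤ p a / pref a + Real.log (p a / pref a) := by linarith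
      have := hZ a
      have hr1 := (hr a).2
      nlinarith [mul_le_mul_of_nonneg_left hphi hβ.le]
    have : ∑ a, p a < ∑ a, pref a :=
      Finset.sum_lt_sum_of_nonempty Finset.univ_nonempty (fun a _ => hall a)
    rw [hprefsum, hpsum] at this
    exact lt_irrefl 1 this
end

section
/- Let A be a finite nonempty set, let πref and π be probability distributions on A with πref(a) > 0 and π(a) > 0 for all a ∈ A, let β > 0 and Rmax ≥ 1, let r : A → [0, Rmax], and suppose there exists Z ∈ ℝ such that r(a) = β·(π(a)/πref(a) + log(π(a)/πref(a))) + Z for all a ∈ A. Then for every a ∈ A: e^{−e}·exp(−Rmax/β) ≤ π(a)/πref(a) ≤ 1 + Rmax/β. -/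
/-- Density-ratio bound for the optimal policy under mixed `χ²`-regularization: if
`r(a) = β·(π(a)/πref(a) + log(π(a)/πref(a))) + Z` for all `a`, with `r` taking values in
`[0, Rmax]`, then `e^{-e}·e^{-Rmax/β} ≤ π(a)/πref(a) ≤ 1 + Rmax/β` for every `a`. -/
theorem density_ratio_bound {A : Type*} [Fintype A] [Nonempty A]
    (pref p : A → ℝ) (hpref : ∀ a, 0 < pref a) (hp : ∀ a, 0 < p a)
    (hprefsum : ∑ a, pref a = 1) (hpsum : ∑ a, p a = 1)
    (β Rmax : ℝ) (hβ : 0 < β) (hR : 1 ≤ Rmax)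
    (r : A → ℝ) (hr : ∀ a, r a ∈ Set.Icc (0 : ℝ) Rmax)
    (Z : ℝ)
    (hZ : ∀ a, r a = β * (p a / pref a + Real.log (p a / pref a)) + Z) :
    ∀ a, Real.exp (-Real.exp 1) * Real.exp (-(Rmax / β)) ≤ p a / pref a ∧
      p a / pref a ≤ 1 + Rmax / β := by
  -- there exists a point where p ≤ pref
  obtain ⟨a0, h0⟩ : ∃ a, p a ≤ pref a := by
    by_contra h
    push_neg at h
    have : (∑ a, pref a) < ∑ a, p a :=
      Finset.sum_lt_sum_of_nonempty Finset.univ_nonempty (fun a _ => h a)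
    rw [hprefsum, hpsum] at this
    exact lt_irrefl 1 this
  obtain ⟨a1, h1⟩ : ∃ a, pref a ≤ p a := by
    by_contra h
    push_neg at h
    have : (∑ a, p a) < ∑ a, pref a :=
      Finset.sum_lt_sum_of_nonempty Finset.univ_nonempty (fun a _ => h a)
    rw [hprefsum, hpsum] at this
    exact lt_irrefl 1 this
  have hz0 : p a0 / pref a0 ≤ 1 := (div_le_one (hpref a0)).mpr h0
  have hz1 : 1 ≤ p a1 / pref a1 := (one_le_div (hpref a1)).mpr h1
  -- bound Z from below
  have hZlow : -β ≤ Z := by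
    have hlog0 : Real.log (p a0 / pref a0) ≤ 0 := Real.log_nonpos
      (le_of_lt (div_pos (hp a0) (hpref a0))) hz0
    have h := (hr a0).1
    rw [hZ a0] at h
    nlinarith
  -- bound Z from above
  have hZhigh : Z ≤ Rmax - β := by
    have hlog1 : 0 ≤ Real.log (p a1 / pref a1) := Real.log_nonneg hz1
    have h := (hr a1).2
    rw [hZ a1] at h
    nlinarith
  intro a
  set z := p a / pref a with hzdef
  have hzpos : 0 < z := div_pos (hp a) (hpref a)
  have hup : z + Real.log z ≤ Rmax / β + 1 := by
    have h := (hr a).2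
    rw [hZ a] at h
    rw [div_add' _ _ _ (ne_of_gt hβ)]
    rw [le_div_iff₀ hβ]
    nlinarith
  have hlo : 1 - Rmax / β ≤ z + Real.log z := by
    have h := (hr a).1
    rw [hZ a] at h
    rw [sub_div' (ne_of_gt hβ)] at *
    rw [div_le_iff₀ hβ]
    nlinarith
  constructor
  · by_contra hc
    push_neg at hc
    rw [← Real.exp_add] at hc
    have hlog : Real.log z < -Real.exp 1 + -(Rmax / β) := by
      have := Real.log_lt_log hzpos hc
      rwa [Real.log_exp] at this
    have hzle : z < 1 := by
      have h1 : -Real.exp 1 + -(Rmax / β) ≤ 0 := by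
        have h2 := Real.exp_pos (1 : ℝ)
        have h3 : 0 < Rmax / β := div_pos (lt_of_lt_of_le one_pos hR) hβ
        linarith
      calc z < Real.exp (-Real.exp 1 + -(Rmax / β)) := hc
        _ ≤ 1 := Real.exp_le_one_iff.mpr h1
    have he : 1 < Real.exp 1 := Real.one_lt_exp_iff.mpr one_pos
    linarith
  · rcases le_or_gt z 1 with h | h
    · have : 0 < Rmax / β := div_pos (lt_of_lt_of_le one_pos hR) hβ
      linarith
    · have : 0 ≤ Real.log z := Real.log_nonneg h.le
      linarith
end

section
/- Let X and A be finite nonempty sets, ρ a probability distribution on X, and πref a reference policy with πref(a|x) > 0 for all x, a. Let β > 0, let f : ℝ → ℝ be convex on [0, ∞), and let π̄ be a policy with π̄(a|x) > 0 for all x, a such that f is differentiable at π̄(a|x)/πref(a|x) for every x, a. Define the implicit reward r̄(x,a) := β·f′(π̄(a|x)/πref(a|x)). Then π̄ maximizes, over all policies π (maps assigning to each x ∈ X a probability distribution π(·|x) on A), the f-divergence-regularized objective Σ_x ρ(x)·[Σ_a π(a|x)·r̄(x,a) − β·Σ_a πref(a|x)·f(π(a|x)/πref(a|x))]. -/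
lemma tangent_le_aux {f : ℝ → ℝ} (hf : ConvexOn ℝ (Set.Ici 0) f)
    {u v : ℝ} (hu : 0 < u) (hv : 0 ≤ v) (hd : DifferentiableAt ℝ f u) :
    v * deriv f u - f v ≤ u * deriv f u - f u := by
  rcases lt_trichotomy u v with h | h | h
  · have := hf.deriv_le_slope (Set.mem_Ici.2 hu.le) (Set.mem_Ici.2 hv) h hd
    rw [slope_def_field, le_div_iff₀ (by linarith)] at this
    nlinarith
  · simp [h]
  · have := hf.slope_le_deriv (Set.mem_Ici.2 hv) (Set.mem_Ici.2 hu.le) h hd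
    rw [slope_def_field, div_le_iff₀ (by linarith)] at this
    nlinarith

/-- Any positive policy `π̄` exactly maximizes the `f`-divergence-regularized RLHF objective
under its own implicit reward model `r̄(x,a) = β·f′(π̄(a|x)/πref(a|x))`. -/
theorem selfconsistency_f_regularized
    {X A : Type*} [Fintype X] [Fintype A] [Nonempty X] [Nonempty A]
    (ρ : X → ℝ) (hρ : ∀ x, 0 ≤ ρ x) (hρsum : ∑ x, ρ x = 1)
    (pref : X → A → ℝ) (hpref : ∀ x a, 0 < pref x a)
    (hprefsum : ∀ x, ∑ a, pref x a = 1)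
    (β : ℝ) (hβ : 0 < β)
    (f : ℝ → ℝ) (hf : ConvexOn ℝ (Set.Ici 0) f)
    (pbar : X → A → ℝ) (hpbar : ∀ x a, 0 < pbar x a)
    (hpbarsum : ∀ x, ∑ a, pbar x a = 1)
    (hdiff : ∀ x a, DifferentiableAt ℝ f (pbar x a / pref x a)) :
    ∀ pol : X → A → ℝ, (∀ x a, 0 ≤ pol x a) → (∀ x, ∑ a, pol x a = 1) →
      ∑ x, ρ x * ((∑ a, pol x a * (β * deriv f (pbar x a / pref x a))) -
          β * ∑ a, pref x a * f (pol x a / pref x a)) ≤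
        ∑ x, ρ x * ((∑ a, pbar x a * (β * deriv f (pbar x a / pref x a))) -
          β * ∑ a, pref x a * f (pbar x a / pref x a)) := by
  intro pol hpol hpolsum
  apply Finset.sum_le_sum
  intro x _
  apply mul_le_mul_of_nonneg_left _ (hρ x)
  rw [sub_le_sub_iff, Finset.mul_sum, Finset.mul_sum, ← Finset.sum_add_distrib,
    ← Finset.sum_add_distrib]
  apply Finset.sum_le_sum
  intro a _
  have hpr := hpref x a
  have key := tangent_le_aux hf (div_pos (hpbar x a) hpr) (div_nonneg (hpol x a) hpr.le)
    (hdiff x a)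
  have := mul_le_mul_of_nonneg_left key hpr.le
  rw [mul_sub, mul_sub, ← mul_assoc, mul_div_assoc', mul_div_cancel_left₀ _ hpr.ne',
    ← mul_assoc, mul_div_assoc', mul_div_cancel_left₀ _ hpr.ne'] at this
  nlinarith [mul_le_mul_of_nonneg_left this hβ.le]
end

section
/- Let V ≥ R ≥ 1 be reals and let z, z′ ∈ ℝ with |z| ≤ R and |z′| ≤ V. Then |z − z′| ≤ 4·e^{2R}·V·|σ(z) − σ(z′)|, where σ(u) = e^u/(1+e^u). -/
/-- The sigmoid function `σ(u) = e^u / (1 + e^u)`. -/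
noncomputable def sigmoid (u : ℝ) : ℝ := Real.exp u / (1 + Real.exp u)

lemma sigmoid_mono : Monotone sigmoid := by
  intro a b hab
  unfold sigmoid
  have ha := Real.exp_pos a
  have hb := Real.exp_pos b
  rw [div_le_div_iff₀ (by linarith) (by linarith)]
  have := Real.exp_le_exp.2 hab
  nlinarith

lemma sigmoid_sub (a b : ℝ) :
    sigmoid b - sigmoid a =
      (Real.exp b - Real.exp a) / ((1 + Real.exp a) * (1 + Real.exp b)) := by
  have ha := Real.exp_pos a
  have hb := Real.exp_pos b
  unfold sigmoid
  field_simp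
  ring

lemma sigmoid_key (R a b : ℝ) (hR : 1 ≤ R) (hab : a ≤ b) (ha : -(2*R) ≤ a) (hb : b ≤ 2*R) :
    (b - a) / (4 * Real.exp (2*R)) ≤ sigmoid b - sigmoid a := by
  set m := (a + b) / 2 with hm
  have hem := Real.exp_pos m
  have hnum : Real.exp m * (b - a) ≤ Real.exp b - Real.exp a := by
    rcases eq_or_lt_of_le hab with h | h
    · subst h; simp
    · have hd0 : 0 < (b - a) / 2 := by linarith
      have hs := Real.self_lt_sinh_iff.2 hd0
      rw [Real.sinh_eq] at hs
      have hb' : Real.exp b = Real.exp m * Real.exp ((b - a) / 2) := by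
        rw [← Real.exp_add, hm]; ring_nf
      have ha' : Real.exp a = Real.exp m * Real.exp (-((b - a) / 2)) := by
        rw [← Real.exp_add, hm]; ring_nf
      rw [hb', ha']
      nlinarith
  have h1 : (1:ℝ) ≤ Real.exp (2*R) * Real.exp m := by
    rw [← Real.exp_add]
    calc (1:ℝ) = Real.exp 0 := by simp
    _ ≤ _ := Real.exp_le_exp.2 (by rw [hm]; linarith)
  have h2 : Real.exp a ≤ Real.exp (2*R) * Real.exp m := by
    rw [← Real.exp_add]
    exact Real.exp_le_exp.2 (by rw [hm]; linarith)
  have h3 : Real.exp b ≤ Real.exp (2*R) * Real.exp m := by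
    rw [← Real.exp_add]
    exact Real.exp_le_exp.2 (by rw [hm]; linarith)
  have h4 : Real.exp a * Real.exp b ≤ Real.exp (2*R) * Real.exp m := by
    rw [← Real.exp_add, ← Real.exp_add]
    exact Real.exp_le_exp.2 (by rw [hm]; linarith)
  have hD : (1 + Real.exp a) * (1 + Real.exp b) ≤ 4 * Real.exp (2*R) * Real.exp m := by
    nlinarith
  have hDpos : 0 < (1 + Real.exp a) * (1 + Real.exp b) := by
    have := Real.exp_pos a; have := Real.exp_pos b; nlinarith
  rw [sigmoid_sub, div_le_div_iff₀ (by positivity) hDpos]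
  have hba : 0 ≤ b - a := by linarith
  nlinarith [mul_le_mul_of_nonneg_left hD hba,
    mul_le_mul_of_nonneg_left hnum (le_of_lt (by positivity : (0:ℝ) < 4 * Real.exp (2*R)))]

/-- Inverse-Lipschitz estimate for the sigmoid: for `V ≥ R ≥ 1`, `|z| ≤ R`, `|z′| ≤ V`,
`|z − z′| ≤ 4·e^{2R}·V·|σ(z) − σ(z′)|`. -/
theorem sigmoid_inverse_lipschitz (R V z z' : ℝ) (hR : 1 ≤ R) (hRV : R ≤ V)
    (hz : |z| ≤ R) (hz' : |z'| ≤ V) :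
    |z - z'| ≤ 4 * Real.exp (2 * R) * V * |sigmoid z - sigmoid z'| := by
  have hE : (0:ℝ) < Real.exp (2 * R) := Real.exp_pos _
  have hV1 : (1:ℝ) ≤ V := le_trans hR hRV
  obtain ⟨hz1, hz2⟩ := abs_le.1 hz
  obtain ⟨hz1', hz2'⟩ := abs_le.1 hz'
  rcases le_or_gt (|z'|) (2*R) with h2 | h2
  · obtain ⟨hw1, hw2⟩ := abs_le.1 h2
    rcases le_total z z' with hzz | hzz
    · have hk := sigmoid_key R z z' hR hzz (by linarith) (by linarith)
      have hσ : 0 ≤ sigmoid z' - sigmoid z := by linarith [sigmoid_mono hzz]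
      have habs1 : |z - z'| = z' - z := by
        rw [abs_sub_comm]; exact abs_of_nonneg (by linarith)
      have habs2 : |sigmoid z - sigmoid z'| = sigmoid z' - sigmoid z := by
        rw [abs_sub_comm]; exact abs_of_nonneg hσ
      rw [habs1, habs2, div_le_iff₀ (by positivity)] at *
      nlinarith [mul_nonneg (mul_nonneg (le_of_lt hE) (by linarith : (0:ℝ) ≤ V - 1)) hσ]
    · have hk := sigmoid_key R z' z hR hzz (by linarith) (by linarith)
      have hσ : 0 ≤ sigmoid z - sigmoid z' := by linarith [sigmoid_mono hzz]
      have habs1 : |z - z'| = z - z' := abs_of_nonneg (by linarith)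
      have habs2 : |sigmoid z - sigmoid z'| = sigmoid z - sigmoid z' := abs_of_nonneg hσ
      rw [habs1, habs2, div_le_iff₀ (by positivity)] at *
      nlinarith [mul_nonneg (mul_nonneg (le_of_lt hE) (by linarith : (0:ℝ) ≤ V - 1)) hσ]
  · rcases lt_abs.1 h2 with h | h
    · -- z' > 2R
      have hk := sigmoid_key R z (2*R) hR (by linarith) (by linarith) (le_refl _)
      have hmono : sigmoid (2*R) ≤ sigmoid z' := sigmoid_mono (le_of_lt h)
      have hσ : (2*R - z) / (4 * Real.exp (2*R)) ≤ sigmoid z' - sigmoid z := by linarith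
      rw [div_le_iff₀ (by positivity)] at hσ
      have hσ0 : 0 ≤ sigmoid z' - sigmoid z := by
        have := div_nonneg (by linarith : (0:ℝ) ≤ 2*R - z)
          (by positivity : (0:ℝ) ≤ 4 * Real.exp (2*R))
        linarith [sigmoid_key R z (2*R) hR (by linarith) (by linarith) (le_refl (2*R))]
      have habs1 : |z - z'| = z' - z := by
        rw [abs_sub_comm]; exact abs_of_nonneg (by linarith)
      have habs2 : |sigmoid z - sigmoid z'| = sigmoid z' - sigmoid z := by
        rw [abs_sub_comm]; exact abs_of_nonneg hσ0
      rw [habs1, habs2]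
      have hlin : z' - z ≤ V * (2*R - z) := by
        nlinarith [mul_nonneg (by linarith : (0:ℝ) ≤ V - 1) (by linarith : (0:ℝ) ≤ R - z),
          mul_nonneg (by linarith : (0:ℝ) ≤ R - 1) (by linarith : (0:ℝ) ≤ V)]
      nlinarith [mul_le_mul_of_nonneg_left hσ (by linarith : (0:ℝ) ≤ V)]
    · -- z' < -2R
      have hk := sigmoid_key R (-(2*R)) z hR (by linarith) (le_refl _) (by linarith)
      have hmono : sigmoid z' ≤ sigmoid (-(2*R)) := sigmoid_mono (by linarith)
      have hσ : (z + 2*R) / (4 * Real.exp (2*R)) ≤ sigmoid z - sigmoid z' := by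
        have : (z - -(2*R)) / (4 * Real.exp (2*R)) ≤ sigmoid z - sigmoid (-(2*R)) := hk
        have h' : (z + 2*R) = z - -(2*R) := by ring
        rw [h']; linarith
      rw [div_le_iff₀ (by positivity)] at hσ
      have hσ0 : 0 ≤ sigmoid z - sigmoid z' := by
        nlinarith [Real.exp_pos (2*R)]
      have habs1 : |z - z'| = z - z' := abs_of_nonneg (by linarith)
      have habs2 : |sigmoid z - sigmoid z'| = sigmoid z - sigmoid z' := abs_of_nonneg hσ0
      rw [habs1, habs2]
      have hlin : z - z' ≤ V * (z + 2*R) := by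
        nlinarith [mul_nonneg (by linarith : (0:ℝ) ≤ V - 1) (by linarith : (0:ℝ) ≤ R + z),
          mul_nonneg (by linarith : (0:ℝ) ≤ R - 1) (by linarith : (0:ℝ) ≤ V)]
      nlinarith [mul_le_mul_of_nonneg_left hσ (by linarith : (0:ℝ) ≤ V)]
end

section
/- Let V ≥ R ≥ 1 be reals and let z, z′ ∈ ℝ with |z| ≤ R and |z′| ≤ V. Then |z − z′| ≤ 4·e^{2R}·V·√((√σ(z) − √σ(z′))² + (√σ(−z) − √σ(−z′))²), where σ(u) = e^u/(1+e^u). -/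
lemma aux_self_le_sinh {x : ℝ} (hx : 0 ≤ x) : x ≤ Real.sinh x := by
  rcases hx.eq_or_lt with h | h
  · simp [← h]
  · exact (Real.self_lt_sinh_iff.2 h).le

lemma aux_sqrt_two_le_two : Real.sqrt 2 ≤ 2 := by
  nlinarith [Real.sq_sqrt (by norm_num : (0:ℝ) ≤ 2), Real.sqrt_nonneg 2]

lemma aux_cosh_le_exp (x : ℝ) : Real.cosh x ≤ Real.exp |x| := by
  rw [← Real.cosh_abs, Real.cosh_eq]
  nlinarith [Real.exp_pos (-|x|), Real.exp_pos |x|, Real.one_le_exp (abs_nonneg x),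
    Real.exp_le_one_iff.2 (neg_nonpos.2 (abs_nonneg x))]

lemma aux_key {s : ℝ} (hs1 : 1 ≤ s) : (s^2 - 1) * s ≤ (2*s - 2) * s^2 := by
  nlinarith [sq_nonneg (s - 1)]

lemma aux_two_le_exp {R : ℝ} (hR : 1 ≤ R) : 2 ≤ Real.exp R := by
  nlinarith [Real.add_one_le_exp R]

lemma aux_one_le_sq {x : ℝ} (h : 2 ≤ x) : (1:ℝ) ≤ x ^ 2 := by nlinarith

lemma aux_r1 {D E V : ℝ} (hD : D ≤ 2*V) (hD0 : 0 ≤ D) (hE : 1 ≤ E) (hV : 1 ≤ V) :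
    Real.sqrt 2 * D ≤ 4 * E * V := by
  nlinarith [aux_sqrt_two_le_two, Real.sqrt_nonneg 2]

lemma aux_caseA {D ER V : ℝ} (hD0 : 0 ≤ D) (hER : 2 ≤ ER) (hV : 1 ≤ V) :
    Real.sqrt 2 * D / (4 * ER ^ 2 * V) ≤ (D / 4) / ER := by
  rw [div_le_div_iff₀ (by positivity) (by positivity)]
  have hDER : 0 ≤ D * ER := mul_nonneg hD0 (by linarith)
  have hERV : (2:ℝ) ≤ ER * V := by nlinarith
  calc Real.sqrt 2 * D * ER = (D * ER) * Real.sqrt 2 := by ring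
  _ ≤ (D * ER) * (ER * V) :=
      mul_le_mul_of_nonneg_left (aux_sqrt_two_le_two.trans (by linarith)) hDER
  _ = D / 4 * (4 * ER ^ 2 * V) := by ring

lemma aux_three_half_le_exp {R : ℝ} (hR : 1 ≤ R) : (3:ℝ)/2 ≤ Real.exp (R/2) := by
  nlinarith [Real.add_one_le_exp (R/2)]

lemma aux_exp_neg_one : Real.exp (-1) ≤ (10:ℝ)/27 := by
  rw [Real.exp_neg, inv_le_comm₀ (Real.exp_pos 1) (by norm_num)]
  nlinarith [Real.exp_one_gt_d9]

lemma aux_numeric {W E : ℝ} (hW : (3:ℝ)/2 ≤ W) (hE : E ≤ (10:ℝ)/27) (hE0 : 0 ≤ E) :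
    Real.sqrt 2 * (2 * W) ≤ (1 - E) * (2 * W ^ 4) := by
  have hW0 : (0:ℝ) ≤ W := by linarith
  have hW3 : (27:ℝ)/8 ≤ W ^ 3 := by
    have := pow_le_pow_left₀ (by norm_num : (0:ℝ) ≤ 3/2) hW 3
    norm_num at this
    linarith
  have h1 : (2:ℝ) ≤ (1 - E) * W ^ 3 := by
    have := mul_le_mul (by linarith : (17:ℝ)/27 ≤ 1 - E) hW3 (by norm_num) (by linarith)
    norm_num at this
    linarith
  calc Real.sqrt 2 * (2 * W) ≤ 2 * (2 * W) :=
        mul_le_mul_of_nonneg_right aux_sqrt_two_le_two (by linarith)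
  _ ≤ ((1 - E) * W ^ 3) * (2 * W) := mul_le_mul_of_nonneg_right h1 (by linarith)
  _ = (1 - E) * (2 * W ^ 4) := by ring

set_option maxHeartbeats 2000000 in
/-- Hellinger-distance version of the inverse-Lipschitz estimate for the sigmoid:
for `V ≥ R ≥ 1`, `|z| ≤ R`, `|z′| ≤ V`,
`|z − z′| ≤ 4·e^{2R}·V·√((√σ(z) − √σ(z′))² + (√σ(−z) − √σ(−z′))²)`. -/
theorem sigmoid_inverse_lipschitz_hellinger (R V z z' : ℝ) (hR : 1 ≤ R) (hRV : R ≤ V)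
    (hz : |z| ≤ R) (hz' : |z'| ≤ V) :
    |z - z'| ≤ 4 * Real.exp (2 * R) * V *
      Real.sqrt ((Real.sqrt (sigmoid z) - Real.sqrt (sigmoid z')) ^ 2 +
        (Real.sqrt (sigmoid (-z)) - Real.sqrt (sigmoid (-z'))) ^ 2) := by
  have hV1 : (1:ℝ) ≤ V := hR.trans hRV
  set a := Real.exp (z/2) with ha_def
  set b := Real.exp (z'/2) with hb_def
  have ha : 0 < a := Real.exp_pos _
  have hb : 0 < b := Real.exp_pos _
  have ha2 : a ^ 2 = Real.exp z := by
    rw [ha_def, sq, ← Real.exp_add]; ring_nf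
  have hb2 : b ^ 2 = Real.exp z' := by
    rw [hb_def, sq, ← Real.exp_add]; ring_nf
  have hnum : a - b = Real.exp ((z+z')/4) * (2 * Real.sinh ((z-z')/4)) := by
    rw [Real.sinh_eq, ha_def, hb_def,
      show z/2 = (z+z')/4 + (z-z')/4 by ring,
      show z'/2 = (z+z')/4 + -((z-z')/4) by ring,
      Real.exp_add, Real.exp_add]
    ring
  have hden : 1 + a * b = Real.exp ((z+z')/4) * (2 * Real.cosh ((z+z')/4)) := by
    rw [Real.cosh_eq, ha_def, hb_def, ← Real.exp_add,
      show z/2 + z'/2 = (z+z')/4 + (z+z')/4 by ring, Real.exp_add]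
    have hcan : Real.exp ((z+z')/4) * Real.exp (-((z+z')/4)) = 1 := by
      rw [← Real.exp_add]; simp
    nlinarith [hcan]
  clear_value a b
  have hsigz : sigmoid z = a ^ 2 / (1 + a ^ 2) := by rw [sigmoid, ← ha2]
  have hsigz' : sigmoid z' = b ^ 2 / (1 + b ^ 2) := by rw [sigmoid, ← hb2]
  have hsignz : sigmoid (-z) = 1 / (1 + a ^ 2) := by
    rw [sigmoid, Real.exp_neg, ← ha2]
    rw [div_eq_div_iff (by positivity) (by positivity)]
    field_simp
    ring
  have hsignz' : sigmoid (-z') = 1 / (1 + b ^ 2) := by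
    rw [sigmoid, Real.exp_neg, ← hb2]
    rw [div_eq_div_iff (by positivity) (by positivity)]
    field_simp
    ring
  set A := Real.sqrt (1 + a ^ 2) with hA_def
  set B := Real.sqrt (1 + b ^ 2) with hB_def
  have hA0 : 0 < A := Real.sqrt_pos.2 (by positivity)
  have hB0 : 0 < B := Real.sqrt_pos.2 (by positivity)
  have hA : A ^ 2 = 1 + a ^ 2 := Real.sq_sqrt (by positivity)
  have hB : B ^ 2 = 1 + b ^ 2 := Real.sq_sqrt (by positivity)
  have h1a : Real.sqrt (sigmoid z) = a / A := by
    rw [hsigz, Real.sqrt_div (by positivity), Real.sqrt_sq ha.le]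
  have h1b : Real.sqrt (sigmoid z') = b / B := by
    rw [hsigz', Real.sqrt_div (by positivity), Real.sqrt_sq hb.le]
  have h2a : Real.sqrt (sigmoid (-z)) = 1 / A := by
    rw [hsignz, Real.sqrt_div (by norm_num), Real.sqrt_one]
  have h2b : Real.sqrt (sigmoid (-z')) = 1 / B := by
    rw [hsignz', Real.sqrt_div (by norm_num), Real.sqrt_one]
  rw [h1a, h1b, h2a, h2b]
  clear_value A B
  -- Hellinger identity
  have hab : (0:ℝ) < 1 + a * b := by positivity
  have hId : (a/A - b/B) ^ 2 + (1/A - 1/B) ^ 2 = 2 - 2 * (1 + a * b) / (A * B) := by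
    have expand : (a/A - b/B) ^ 2 + (1/A - 1/B) ^ 2
        = (a^2+1)/A^2 + (b^2+1)/B^2 - 2*(a*b+1)/(A*B) := by
      field_simp
      ring
    rw [expand, hA, hB]
    have e1 : (a^2+1)/(1+a^2) = 1 := by rw [div_eq_one_iff_eq (by positivity)]; ring
    have e2 : (b^2+1)/(1+b^2) = 1 := by rw [div_eq_one_iff_eq (by positivity)]; ring
    rw [e1, e2]
    ring
  set t := (a - b) / (1 + a * b) with ht_def
  have hABt : A * B = (1 + a * b) * Real.sqrt (1 + t ^ 2) := by
    have h1 : A * B = Real.sqrt ((1 + a^2) * (1 + b^2)) := by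
      rw [hA_def, hB_def]; exact (Real.sqrt_mul (by positivity) _).symm
    have h2 : (1 + a^2) * (1 + b^2) = (1 + a*b)^2 * (1 + t^2) := by
      rw [ht_def]
      field_simp
      ring
    rw [h1, h2, Real.sqrt_mul (by positivity), Real.sqrt_sq hab.le]
  have hts : |t| = Real.sinh (|z - z'| / 4) / Real.cosh ((z+z')/4) := by
    rw [ht_def, abs_div, hnum, hden, abs_of_pos (by positivity :
        (0:ℝ) < Real.exp ((z+z')/4) * (2 * Real.cosh ((z+z')/4)))]
    rw [abs_mul, abs_of_pos (Real.exp_pos _), abs_mul, abs_of_pos (by norm_num : (0:ℝ) < 2)]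
    rw [Real.abs_sinh, show |(z - z')/4| = |z - z'|/4 by rw [abs_div]; norm_num]
    rw [mul_div_mul_left _ _ (Real.exp_pos ((z+z')/4)).ne']
    rw [mul_div_mul_left _ _ (by norm_num : (2:ℝ) ≠ 0)]
  clear_value t
  set s := Real.sqrt (1 + t ^ 2) with hs_def
  have hs2 : s ^ 2 = 1 + t ^ 2 := Real.sq_sqrt (by positivity)
  have hs1 : 1 ≤ s := by
    rw [hs_def]
    apply (Real.le_sqrt' one_pos).2
    nlinarith [sq_nonneg t]
  have hs0 : 0 < s := by linarith
  clear_value s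
  have hId2 : (a/A - b/B) ^ 2 + (1/A - 1/B) ^ 2 = 2 - 2 / s := by
    rw [hId, hABt]
    have : 2 * (1 + a*b) / ((1 + a*b) * s) = 2 / s := by
      rw [mul_comm 2 (1 + a*b), mul_div_mul_left 2 s hab.ne']
    rw [this]
  -- lower bound for Hellinger by t²/(1+t²)
  have key : t ^ 2 / (1 + t ^ 2) ≤ 2 - 2 / s := by
    have ht2 : t ^ 2 = s ^ 2 - 1 := by rw [hs2]; ring
    have e2 : t ^ 2 / (1 + t ^ 2) = (s^2 - 1) / s^2 := by rw [← hs2, ht2]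
    have e1 : 2 - 2 / s = (2*s - 2) / s := by
      rw [sub_div, mul_div_assoc, div_self hs0.ne', mul_one]
    rw [e2, e1, div_le_div_iff₀ (by positivity) hs0]
    exact aux_key hs1
  have hH : |t| / s ≤ Real.sqrt ((a/A - b/B) ^ 2 + (1/A - 1/B) ^ 2) := by
    have hsq : (|t| / s) ^ 2 ≤ (a/A - b/B) ^ 2 + (1/A - 1/B) ^ 2 := by
      rw [hId2, div_pow, sq_abs, hs2]
      exact key
    calc |t| / s = Real.sqrt ((|t| / s) ^ 2) := (Real.sqrt_sq (by positivity)).symm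
    _ ≤ _ := Real.sqrt_le_sqrt hsq
  -- abbreviations
  set D := |z - z'| with hD_def
  have hD0 : 0 ≤ D := abs_nonneg _
  have hDle : D ≤ 2 * V := by
    have := abs_sub z z'
    calc D ≤ |z| + |z'| := abs_sub _ _
    _ ≤ R + V := add_le_add hz hz'
    _ ≤ 2 * V := by linarith
  set E2R := Real.exp (2 * R) with hE2R_def
  have hER2 : (2:ℝ) ≤ Real.exp R := aux_two_le_exp hR
  have hE2Rsq : E2R = Real.exp R ^ 2 := by
    rw [hE2R_def, sq, ← Real.exp_add]; ring_nf
  have hE2R1 : (1:ℝ) ≤ E2R := by rw [hE2Rsq]; exact aux_one_le_sq hER2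
  set C := 4 * E2R * V with hC_def
  have hCval : C = 4 * E2R * V := hC_def
  clear_value C
  have hC0 : (0:ℝ) < C := by
    rw [hC_def]; positivity
  have hr1 : Real.sqrt 2 * D ≤ C := by
    rw [hCval]
    exact aux_r1 hDle hD0 hE2R1 hV1
  -- main lower bound on |t|
  have hlow : Real.sqrt 2 * D / C ≤ |t| := by
    rw [hts]
    rcases le_or_gt (|z'|) (3 * R) with hcase | hcase
    · -- central case
      have hcosh : Real.cosh ((z+z')/4) ≤ Real.exp R := by
        calc Real.cosh ((z+z')/4) ≤ Real.exp (|(z+z')/4|) := aux_cosh_le_exp _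
        _ ≤ Real.exp R := by
          apply Real.exp_le_exp.2
          rw [abs_div, abs_of_pos (by norm_num : (0:ℝ) < 4)]
          have : |z + z'| ≤ 4 * R := by
            calc |z + z'| ≤ |z| + |z'| := abs_add_le _ _
            _ ≤ R + 3 * R := add_le_add hz hcase
            _ = 4 * R := by ring
          linarith
      have hsinh : D / 4 ≤ Real.sinh (D / 4) := aux_self_le_sinh (by positivity)
      calc Real.sqrt 2 * D / C ≤ (D / 4) / Real.exp R := by
            rw [hCval, hE2Rsq]
            exact aux_caseA hD0 hER2 hV1
      _ ≤ Real.sinh (D / 4) / Real.cosh ((z+z')/4) :=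
            div_le_div₀ (Real.sinh_nonneg_iff.2 (by positivity)) hsinh (Real.cosh_pos _) hcosh
    · -- tail case : |z'| > 3R
      have hD2R : 2 * R ≤ D := by
        have h1 : |z'| - |z| ≤ |z' - z| := abs_sub_abs_le_abs_sub z' z
        rw [hD_def, abs_sub_comm]
        linarith
      have hM : |z + z'| ≤ D + 2 * R := by
        have h1 : |z'| ≤ |z' - z| + |z| := by
          calc |z'| = |(z' - z) + z| := by ring_nf
          _ ≤ |z' - z| + |z| := abs_add_le _ _
        have h2 : |z + z'| ≤ |z| + |z'| := abs_add_le _ _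
        rw [hD_def, abs_sub_comm]
        linarith
      have hx : (1:ℝ)/2 ≤ D / 4 := by linarith
      have hexpneg : Real.exp (-(D/4)) ≤ Real.exp (-1) * Real.exp (D/4) := by
        rw [← Real.exp_add]
        apply Real.exp_le_exp.2
        linarith
      have hsinh : (1 - Real.exp (-1)) * Real.exp (D/4) / 2 ≤ Real.sinh (D/4) := by
        rw [Real.sinh_eq]
        linarith [hexpneg]
      have hcosh : Real.cosh ((z+z')/4) ≤ Real.exp (D/4) * Real.exp (R/2) := by
        calc Real.cosh ((z+z')/4) ≤ Real.exp (|(z+z')/4|) := aux_cosh_le_exp _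
        _ ≤ Real.exp (D/4 + R/2) := by
          apply Real.exp_le_exp.2
          rw [abs_div, abs_of_pos (by norm_num : (0:ℝ) < 4)]
          linarith
        _ = Real.exp (D/4) * Real.exp (R/2) := Real.exp_add _ _
      have hsinh0 : (0:ℝ) ≤ (1 - Real.exp (-1)) * Real.exp (D/4) / 2 := by
        have h1 : Real.exp (-1) ≤ 1 := Real.exp_le_one_iff.2 (by norm_num)
        exact div_nonneg (mul_nonneg (by linarith) (Real.exp_pos _).le) (by norm_num)
      have step : ((1 - Real.exp (-1)) * Real.exp (D/4) / 2) / (Real.exp (D/4) * Real.exp (R/2))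
          ≤ Real.sinh (D/4) / Real.cosh ((z+z')/4) :=
        div_le_div₀ (Real.sinh_nonneg_iff.2 (by positivity)) hsinh (Real.cosh_pos _) hcosh
      refine le_trans ?_ step
      rw [div_le_div_iff₀ hC0 (by positivity)]
      -- √2 D (e^{D/4} e^{R/2}) ≤ ((1-e⁻¹) e^{D/4} / 2) · 4 e^{2R} V
      have hEhalf : (3:ℝ)/2 ≤ Real.exp (R/2) := aux_three_half_le_exp hR
      have hEinv : Real.exp (-1) ≤ (10:ℝ)/27 := aux_exp_neg_one
      have hE2RW : E2R = Real.exp (R/2) ^ 4 := by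
        rw [hE2R_def, show (2:ℝ)*R = R/2 + (R/2 + (R/2 + R/2)) by ring,
          Real.exp_add, Real.exp_add, Real.exp_add]
        ring
      have hW0 : (0:ℝ) < Real.exp (R/2) := Real.exp_pos _
      have hX0 : (0:ℝ) < Real.exp (D/4) := Real.exp_pos _
      -- reduce to numeric inequality
      rw [hC_def, hE2RW]
      have hnumeric : Real.sqrt 2 * (2 * Real.exp (R/2)) ≤ (1 - Real.exp (-1)) * (2 * Real.exp (R/2) ^ 4) :=
        aux_numeric hEhalf hEinv (Real.exp_pos _).le
      have hXV : (0:ℝ) ≤ Real.exp (D/4) * V := mul_nonneg hX0.le (by linarith)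
      calc Real.sqrt 2 * D * (Real.exp (D/4) * Real.exp (R/2))
          ≤ Real.sqrt 2 * (2*V) * (Real.exp (D/4) * Real.exp (R/2)) := by
            have h1 : D * (Real.sqrt 2 * (Real.exp (D/4) * Real.exp (R/2)))
                ≤ 2*V * (Real.sqrt 2 * (Real.exp (D/4) * Real.exp (R/2))) :=
              mul_le_mul_of_nonneg_right hDle
                (by positivity)
            linarith [h1]
      _ = Real.sqrt 2 * (2 * Real.exp (R/2)) * (Real.exp (D/4) * V) := by ring
      _ ≤ (1 - Real.exp (-1)) * (2 * Real.exp (R/2) ^ 4) * (Real.exp (D/4) * V) :=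
            mul_le_mul_of_nonneg_right hnumeric hXV
      _ = (1 - Real.exp (-1)) * Real.exp (D/4) / 2 * (4 * Real.exp (R/2) ^ 4 * V) := by ring
  -- final assembly
  have hmain : D ≤ C * (|t| / s) := by
    rw [mul_div_assoc' , le_div_iff₀ hs0]
    have hClow : Real.sqrt 2 * D ≤ C * |t| := by
      have := (div_le_iff₀ hC0).1 hlow
      linarith [mul_comm (|t|) C]
    rcases le_or_gt (|t|) 1 with hu | hu
    · have ht1 : t ^ 2 ≤ 1 := (sq_le_one_iff_abs_le_one t).2 hu
      have hsle : s ≤ Real.sqrt 2 := by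
        rw [hs_def]
        apply Real.sqrt_le_sqrt
        linarith
      linarith [mul_le_mul_of_nonneg_left hsle hD0, hClow]
    · have hsle : s ≤ Real.sqrt 2 * |t| := by
        rw [hs_def, show Real.sqrt 2 * |t| = Real.sqrt (2 * t^2) by
          rw [Real.sqrt_mul (by norm_num), Real.sqrt_sq_eq_abs]]
        apply Real.sqrt_le_sqrt
        have ht1 : 1 < t ^ 2 := by
          exact (one_lt_sq_iff_one_lt_abs t).2 hu
        linarith
      have h1 : D * s ≤ D * (Real.sqrt 2 * |t|) := mul_le_mul_of_nonneg_left hsle hD0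
      linarith [h1, mul_le_mul_of_nonneg_right hr1 (abs_nonneg t)]
  calc D ≤ C * (|t| / s) := hmain
  _ ≤ C * Real.sqrt ((a/A - b/B) ^ 2 + (1/A - 1/B) ^ 2) :=
      mul_le_mul_of_nonneg_left hH hC0.le
end

section
/- Let X and A be finite nonempty sets, ρ a probability distribution on X, πref a reference policy with πref(a|x) > 0 for all x, a, and π any policy. Let Vmax ≥ Rmax > 0 and let r̂, r* : X×A → ℝ satisfy |r*(x,a) − r*(x,b)| ≤ Rmax and |r̂(x,a) − r̂(x,b)| ≤ Vmax for all x, a, b. Write Δ̂(x,a,b) := r̂(x,a) − r̂(x,b), Δ*(x,a,b) := r*(x,a) − r*(x,b), and ε² := Σ_x ρ(x) Σ_{a,b} πref(a|x)πref(b|x)·(clip_{2Rmax}[Δ̂(x,a,b)] − clip_{2Rmax}[Δ*(x,a,b)])². Then Σ_x ρ(x) Σ_{a,b} π(a|x)πref(b|x)·|Δ̂(x,a,b) − Δ*(x,a,b)| ≤ (2Vmax/Rmax)·√(C^π·ε²), where C^π := Σ_x ρ(x) Σ_a π(a|x)²/πref(a|x). -/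
/-- Clipping to the interval `[-R, R]`. -/
noncomputable def clip (R z : ℝ) : ℝ := max (-R) (min R z)

lemma clip_key {R V d s : ℝ} (hR : 0 < R) (hRV : R ≤ V)
    (hs : |s| ≤ R) (hd : |d| ≤ V) :
    |d - s| ≤ (2 * V / R) * |clip (2 * R) d - clip (2 * R) s| := by
  have hK : (2 : ℝ) ≤ 2 * V / R := by
    rw [le_div_iff₀ hR]; nlinarith
  have hK0 : (0 : ℝ) < 2 * V / R := by linarith
  obtain ⟨hs1, hs2⟩ := abs_le.mp hs
  obtain ⟨hd1, hd2⟩ := abs_le.mp hd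
  have hcs : clip (2 * R) s = s := by
    unfold clip
    rw [min_eq_right (by linarith), max_eq_right (by linarith)]
  rw [hcs]
  rcases le_or_gt d (2 * R) with h1 | h1
  · rcases le_or_gt (-(2 * R)) d with h2 | h2
    · have hc : clip (2 * R) d = d := by
        unfold clip; rw [min_eq_right h1, max_eq_right h2]
      rw [hc]
      calc |d - s| = 1 * |d - s| := by rw [one_mul]
        _ ≤ (2 * V / R) * |d - s| :=
          mul_le_mul_of_nonneg_right (by linarith) (abs_nonneg _)
    · have hc : clip (2 * R) d = -(2 * R) := by
        unfold clip; rw [min_eq_right h1, max_eq_left (le_of_lt h2)]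
      rw [hc]
      have habs : |-(2 * R) - s| = -(-(2 * R) - s) := by
        rw [abs_of_nonpos]; linarith
      rw [habs]
      have h3 : R ≤ -(-(2 * R) - s) := by linarith
      have h4 : 2 * V ≤ (2 * V / R) * (-(-(2 * R) - s)) := by
        calc 2 * V = (2 * V / R) * R := by field_simp
          _ ≤ _ := mul_le_mul_of_nonneg_left h3 (le_of_lt hK0)
      calc |d - s| ≤ |d| + |s| := abs_sub _ _
        _ ≤ 2 * V := by linarith [hd, hs]
        _ ≤ _ := h4
  · have hc : clip (2 * R) d = 2 * R := by
      unfold clip; rw [min_eq_left (le_of_lt h1), max_eq_right (by linarith)]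
    rw [hc]
    have habs : |2 * R - s| = 2 * R - s := by
      rw [abs_of_nonneg]; linarith
    rw [habs]
    have h3 : R ≤ 2 * R - s := by linarith
    have h4 : 2 * V ≤ (2 * V / R) * (2 * R - s) := by
      calc 2 * V = (2 * V / R) * R := by field_simp
        _ ≤ _ := mul_le_mul_of_nonneg_left h3 (le_of_lt hK0)
    calc |d - s| ≤ |d| + |s| := abs_sub _ _
      _ ≤ 2 * V := by linarith [hd, hs]
      _ ≤ _ := h4

/-- Transfer of off-policy (under `πref`) accuracy of an estimated reward-difference model to
any target policy `π` at the cost of a multiplicative `χ²`-coverage factor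
`C^π = Σ_x ρ(x) Σ_a π(a|x)²/πref(a|x)`. -/
theorem offpolicy_to_onpolicy_transfer
    {X A : Type*} [Fintype X] [Fintype A] [Nonempty X] [Nonempty A]
    (ρ : X → ℝ) (hρ : ∀ x, 0 ≤ ρ x) (hρsum : ∑ x, ρ x = 1)
    (pref : X → A → ℝ) (hpref : ∀ x a, 0 < pref x a)
    (hprefsum : ∀ x, ∑ a, pref x a = 1)
    (pol : X → A → ℝ) (hpol : ∀ x a, 0 ≤ pol x a) (hpolsum : ∀ x, ∑ a, pol x a = 1)
    (Vmax Rmax : ℝ) (hR : 0 < Rmax) (hV : Rmax ≤ Vmax)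
    (rhat rstar : X → A → ℝ)
    (hstar : ∀ x a b, |rstar x a - rstar x b| ≤ Rmax)
    (hhat : ∀ x a b, |rhat x a - rhat x b| ≤ Vmax)
    (eps2 : ℝ)
    (heps : eps2 = ∑ x, ρ x * ∑ a, ∑ b, pref x a * pref x b *
      (clip (2 * Rmax) (rhat x a - rhat x b) -
        clip (2 * Rmax) (rstar x a - rstar x b)) ^ 2) :
    ∑ x, ρ x * ∑ a, ∑ b, pol x a * pref x b *
        |(rhat x a - rhat x b) - (rstar x a - rstar x b)| ≤
      2 * Vmax / Rmax *
        Real.sqrt ((∑ x, ρ x * ∑ a, (pol x a) ^ 2 / pref x a) * eps2) := by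
  classical
  set K := 2 * Vmax / Rmax with hKdef
  have hK0 : 0 ≤ K := div_nonneg (by linarith) (le_of_lt hR)
  set cd : X → A → A → ℝ := fun x a b =>
    |clip (2 * Rmax) (rhat x a - rhat x b) - clip (2 * Rmax) (rstar x a - rstar x b)|
    with hcd
  set S : ℝ := ∑ x, ρ x * ∑ a, ∑ b, pol x a * pref x b * cd x a b with hSdef
  set Cpi : ℝ := ∑ x, ρ x * ∑ a, (pol x a) ^ 2 / pref x a with hCdef
  -- Step 1: pointwise clipping bound
  have step1 : ∑ x, ρ x * ∑ a, ∑ b, pol x a * pref x b *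
      |(rhat x a - rhat x b) - (rstar x a - rstar x b)| ≤ K * S := by
    have hKS : K * S = ∑ x, ρ x * ∑ a, ∑ b, pol x a * pref x b * (K * cd x a b) := by
      rw [hSdef, Finset.mul_sum]
      refine Finset.sum_congr rfl fun x _ => ?_
      have h : ∑ a, ∑ b, pol x a * pref x b * (K * cd x a b)
          = K * ∑ a, ∑ b, pol x a * pref x b * cd x a b := by
        rw [Finset.mul_sum]
        refine Finset.sum_congr rfl fun a _ => ?_
        rw [Finset.mul_sum]
        exact Finset.sum_congr rfl fun b _ => by ring
      rw [h]; ring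
    rw [hKS]
    refine Finset.sum_le_sum fun x _ => ?_
    refine mul_le_mul_of_nonneg_left ?_ (hρ x)
    refine Finset.sum_le_sum fun a _ => ?_
    refine Finset.sum_le_sum fun b _ => ?_
    refine mul_le_mul_of_nonneg_left ?_
      (mul_nonneg (hpol x a) (le_of_lt (hpref x b)))
    exact clip_key hR hV (hstar x a b) (hhat x a b)
  -- rewrite triple sums as sums over product type
  have triple : ∀ f : X → A → A → ℝ,
      (∑ x, ρ x * ∑ a, ∑ b, f x a b) =
        ∑ p : X × A × A, ρ p.1 * f p.1 p.2.1 p.2.2 := by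
    intro f
    rw [Fintype.sum_prod_type]
    refine Finset.sum_congr rfl fun x _ => ?_
    rw [Fintype.sum_prod_type, Finset.mul_sum]
    exact Finset.sum_congr rfl fun a _ => by rw [Finset.mul_sum]
  set w : X × A × A → ℝ := fun p => ρ p.1 * (pref p.1 p.2.1 * pref p.1 p.2.2) with hw
  have hw0 : ∀ p, 0 ≤ w p := fun p =>
    mul_nonneg (hρ p.1)
      (mul_nonneg (le_of_lt (hpref p.1 p.2.1)) (le_of_lt (hpref p.1 p.2.2)))
  set F : X × A × A → ℝ := fun p =>
    Real.sqrt (w p) * (pol p.1 p.2.1 / pref p.1 p.2.1) with hF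
  set G : X × A × A → ℝ := fun p => Real.sqrt (w p) * cd p.1 p.2.1 p.2.2 with hG
  have hFG : S = ∑ p : X × A × A, F p * G p := by
    rw [hSdef, triple (fun x a b => pol x a * pref x b * cd x a b)]
    refine Finset.sum_congr rfl fun p _ => ?_
    have hsq : Real.sqrt (w p) * Real.sqrt (w p) = w p := Real.mul_self_sqrt (hw0 p)
    have hne : pref p.1 p.2.1 ≠ 0 := ne_of_gt (hpref p.1 p.2.1)
    simp only [hF, hG]
    rw [show Real.sqrt (w p) * (pol p.1 p.2.1 / pref p.1 p.2.1) *
        (Real.sqrt (w p) * cd p.1 p.2.1 p.2.2)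
      = (Real.sqrt (w p) * Real.sqrt (w p)) *
        (pol p.1 p.2.1 / pref p.1 p.2.1) * cd p.1 p.2.1 p.2.2 from by ring, hsq, hw]
    field_simp
  have hF2 : ∑ p : X × A × A, F p ^ 2 = Cpi := by
    have e1 : ∀ p : X × A × A, F p ^ 2 =
        ρ p.1 * (pref p.1 p.2.1 * pref p.1 p.2.2 *
          (pol p.1 p.2.1 / pref p.1 p.2.1) ^ 2) := by
      intro p
      simp only [hF, mul_pow, Real.sq_sqrt (hw0 p)]
      simp only [hw]
      ring
    rw [Finset.sum_congr rfl (fun p _ => e1 p),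
      ← triple (fun x a b => pref x a * pref x b * (pol x a / pref x a) ^ 2), hCdef]
    refine Finset.sum_congr rfl fun x _ => ?_
    congr 1
    refine Finset.sum_congr rfl fun a _ => ?_
    have hne : pref x a ≠ 0 := ne_of_gt (hpref x a)
    have : ∑ b, pref x a * pref x b * (pol x a / pref x a) ^ 2
        = (pref x a * (pol x a / pref x a) ^ 2) * ∑ b, pref x b := by
      rw [Finset.mul_sum]
      exact Finset.sum_congr rfl fun b _ => by ring
    rw [this, hprefsum x]
    field_simp
  have hG2 : ∑ p : X × A × A, G p ^ 2 = eps2 := by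
    have e1 : ∀ p : X × A × A, G p ^ 2 =
        ρ p.1 * (pref p.1 p.2.1 * pref p.1 p.2.2 *
          (clip (2 * Rmax) (rhat p.1 p.2.1 - rhat p.1 p.2.2) -
            clip (2 * Rmax) (rstar p.1 p.2.1 - rstar p.1 p.2.2)) ^ 2) := by
      intro p
      simp only [hG, mul_pow, Real.sq_sqrt (hw0 p), hcd, sq_abs]
      simp only [hw]
      ring
    rw [Finset.sum_congr rfl (fun p _ => e1 p),
      ← triple (fun x a b => pref x a * pref x b *
        (clip (2 * Rmax) (rhat x a - rhat x b) -
          clip (2 * Rmax) (rstar x a - rstar x b)) ^ 2), heps]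
  have hS0 : 0 ≤ S := by
    rw [hSdef]
    refine Finset.sum_nonneg fun x _ => mul_nonneg (hρ x) ?_
    refine Finset.sum_nonneg fun a _ => Finset.sum_nonneg fun b _ => ?_
    exact mul_nonneg (mul_nonneg (hpol x a) (le_of_lt (hpref x b))) (abs_nonneg _)
  have hCS : S ^ 2 ≤ Cpi * eps2 := by
    rw [hFG, ← hF2, ← hG2]
    exact Finset.sum_mul_sq_le_sq_mul_sq _ _ _
  have step2 : S ≤ Real.sqrt (Cpi * eps2) := by
    calc S = Real.sqrt (S ^ 2) := (Real.sqrt_sq hS0).symm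
      _ ≤ Real.sqrt (Cpi * eps2) := Real.sqrt_le_sqrt hCS
  calc _ ≤ K * S := step1
    _ ≤ K * Real.sqrt (Cpi * eps2) := mul_le_mul_of_nonneg_left step2 hK0
end

section
/- Let X and A be finite nonempty sets, ρ a probability distribution on X, πref a reference policy with πref(a|x) > 0 for all x, a, and π any policy. Let η ≥ 0, Rmax > 0, and r̂, r* : X×A → [0, Rmax]. Write Δ̂(x,a,b) := r̂(x,a) − r̂(x,b), Δ*(x,a,b) := r*(x,a) − r*(x,b), and ε² := Σ_x ρ(x) Σ_{a,b} πref(a|x)πref(b|x)·(Δ̂(x,a,b) − Δ*(x,a,b))². Then Σ_x ρ(x) Σ_{a,b} π(a|x)πref(b|x)·|Δ̂(x,a,b) − Δ*(x,a,b)| ≤ 2√(C_η^π·ε²) + 2·C_η^π·Rmax·η, where C_η^π := Σ_x ρ(x) Σ_a π(a|x)²/(πref(a|x) + η·π(a|x)). -/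
/-- Transfer of off-policy reward-difference accuracy to a target policy `π` via the
`η`-smoothed concentrability coefficient
`C_η^π = Σ_x ρ(x) Σ_a π(a|x)²/(πref(a|x) + η·π(a|x))`. -/
theorem offpolicy_to_onpolicy_transfer_smoothed
    {X A : Type*} [Fintype X] [Fintype A] [Nonempty X] [Nonempty A]
    (ρ : X → ℝ) (hρ : ∀ x, 0 ≤ ρ x) (hρsum : ∑ x, ρ x = 1)
    (pref : X → A → ℝ) (hpref : ∀ x a, 0 < pref x a)
    (hprefsum : ∀ x, ∑ a, pref x a = 1)
    (pol : X → A → ℝ) (hpol : ∀ x a, 0 ≤ pol x a) (hpolsum : ∀ x, ∑ a, pol x a = 1)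
    (η Rmax : ℝ) (hη : 0 ≤ η) (hR : 0 < Rmax)
    (rhat rstar : X → A → ℝ)
    (hhat : ∀ x a, rhat x a ∈ Set.Icc (0 : ℝ) Rmax)
    (hstar : ∀ x a, rstar x a ∈ Set.Icc (0 : ℝ) Rmax)
    (eps2 : ℝ)
    (heps : eps2 = ∑ x, ρ x * ∑ a, ∑ b, pref x a * pref x b *
      ((rhat x a - rhat x b) - (rstar x a - rstar x b)) ^ 2) :
    ∑ x, ρ x * ∑ a, ∑ b, pol x a * pref x b *
        |(rhat x a - rhat x b) - (rstar x a - rstar x b)| ≤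
      2 * Real.sqrt
          ((∑ x, ρ x * ∑ a, (pol x a) ^ 2 / (pref x a + η * pol x a)) * eps2) +
        2 * (∑ x, ρ x * ∑ a, (pol x a) ^ 2 / (pref x a + η * pol x a)) * Rmax * η := by
  classical
  have hdenpos : ∀ x a, 0 < pref x a + η * pol x a := by
    intro x a
    have h1 := hpref x a
    have h2 := mul_nonneg hη (hpol x a)
    linarith
  have habs : ∀ x a b,
      |(rhat x a - rhat x b) - (rstar x a - rstar x b)| ≤ 2 * Rmax := by
    intro x a b
    obtain ⟨h1, h1'⟩ := hhat x a
    obtain ⟨h2, h2'⟩ := hhat x b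
    obtain ⟨h3, h3'⟩ := hstar x a
    obtain ⟨h4, h4'⟩ := hstar x b
    rw [abs_le]
    constructor <;> linarith
  set C : ℝ := ∑ x, ρ x * ∑ a, (pol x a) ^ 2 / (pref x a + η * pol x a) with hC
  set T1 : ℝ := ∑ x, ∑ a, ∑ b, ρ x * pref x a * pref x b *
      (pol x a / (pref x a + η * pol x a)) *
      |(rhat x a - rhat x b) - (rstar x a - rstar x b)| with hT1
  set T2 : ℝ := ∑ x, ∑ a, ∑ b, ρ x * ((pol x a) ^ 2 / (pref x a + η * pol x a)) *
      pref x b * |(rhat x a - rhat x b) - (rstar x a - rstar x b)| with hT2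
  -- nonnegativity facts
  have hCnonneg : 0 ≤ C := by
    apply Finset.sum_nonneg
    intro x _
    exact mul_nonneg (hρ x) (Finset.sum_nonneg fun a _ =>
      div_nonneg (sq_nonneg _) (hdenpos x a).le)
  have hT1nonneg : 0 ≤ T1 := by
    apply Finset.sum_nonneg; intro x _
    apply Finset.sum_nonneg; intro a _
    apply Finset.sum_nonneg; intro b _
    exact mul_nonneg (mul_nonneg (mul_nonneg (mul_nonneg (hρ x) (hpref x a).le)
      (hpref x b).le) (div_nonneg (hpol x a) (hdenpos x a).le)) (abs_nonneg _)
  have heps_nonneg : 0 ≤ eps2 := by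
    rw [heps]
    apply Finset.sum_nonneg; intro x _
    exact mul_nonneg (hρ x) (Finset.sum_nonneg fun a _ =>
      Finset.sum_nonneg fun b _ => mul_nonneg
        (mul_nonneg (hpref x a).le (hpref x b).le) (sq_nonneg _))
  -- Step 1 : decompose the LHS
  have step1 : ∑ x, ρ x * ∑ a, ∑ b, pol x a * pref x b *
      |(rhat x a - rhat x b) - (rstar x a - rstar x b)| = T1 + η * T2 := by
    rw [hT1, hT2]
    simp_rw [Finset.mul_sum, ← Finset.sum_add_distrib]
    apply Finset.sum_congr rfl; intro x _
    apply Finset.sum_congr rfl; intro a _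
    apply Finset.sum_congr rfl; intro b _
    have h := (hdenpos x a).ne'
    field_simp
    have hinv : (pol x a * η + pref x a) * (pol x a * η + pref x a)⁻¹ = 1 :=
      mul_inv_cancel₀ (by linarith [hdenpos x a] : (0:ℝ) < pol x a * η + pref x a).ne'
    linear_combination (-(ρ x * pol x a * pref x b *
      |rhat x a - rhat x b - (rstar x a - rstar x b)|)) * hinv
  -- Step 2 : bound T2
  have step2 : T2 ≤ C * (2 * Rmax) := by
    have h1 : T2 ≤ ∑ x, ∑ a, ∑ b, ρ x * ((pol x a) ^ 2 / (pref x a + η * pol x a)) *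
        pref x b * (2 * Rmax) := by
      rw [hT2]
      apply Finset.sum_le_sum; intro x _
      apply Finset.sum_le_sum; intro a _
      apply Finset.sum_le_sum; intro b _
      apply mul_le_mul_of_nonneg_left (habs x a b)
      exact mul_nonneg (mul_nonneg (hρ x)
        (div_nonneg (sq_nonneg _) (hdenpos x a).le)) (hpref x b).le
    have h2 : ∑ x, ∑ a, ∑ b, ρ x * ((pol x a) ^ 2 / (pref x a + η * pol x a)) *
        pref x b * (2 * Rmax) = C * (2 * Rmax) := by
      rw [hC, Finset.sum_mul]
      apply Finset.sum_congr rfl; intro x _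
      rw [mul_assoc, Finset.sum_mul, Finset.mul_sum]
      apply Finset.sum_congr rfl; intro a _
      rw [← Finset.sum_mul, ← Finset.mul_sum, hprefsum x, mul_one]
      ring
    linarith
  -- Step 3 : Cauchy-Schwarz bound for T1
  have step3 : T1 ≤ Real.sqrt (C * eps2) := by
    set f : X × A × A → ℝ := fun p =>
      Real.sqrt (ρ p.1 * (pref p.1 p.2.1 * pref p.1 p.2.2)) *
        (pol p.1 p.2.1 / (pref p.1 p.2.1 + η * pol p.1 p.2.1)) with hf
    set g : X × A × A → ℝ := fun p =>
      Real.sqrt (ρ p.1 * (pref p.1 p.2.1 * pref p.1 p.2.2)) *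
        |(rhat p.1 p.2.1 - rhat p.1 p.2.2) - (rstar p.1 p.2.1 - rstar p.1 p.2.2)| with hg
    have hz : ∀ p : X × A × A, 0 ≤ ρ p.1 * (pref p.1 p.2.1 * pref p.1 p.2.2) :=
      fun p => mul_nonneg (hρ p.1) (mul_nonneg (hpref p.1 p.2.1).le (hpref p.1 p.2.2).le)
    have hfg : ∑ p : X × A × A, f p * g p = T1 := by
      rw [hT1, Fintype.sum_prod_type]
      apply Finset.sum_congr rfl; intro x _
      rw [Fintype.sum_prod_type]
      apply Finset.sum_congr rfl; intro a _
      apply Finset.sum_congr rfl; intro b _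
      have hzz := Real.mul_self_sqrt (hz (x, a, b))
      simp only [hf, hg]
      calc Real.sqrt (ρ x * (pref x a * pref x b)) *
            (pol x a / (pref x a + η * pol x a)) *
            (Real.sqrt (ρ x * (pref x a * pref x b)) *
              |(rhat x a - rhat x b) - (rstar x a - rstar x b)|)
          = Real.sqrt (ρ x * (pref x a * pref x b)) *
              Real.sqrt (ρ x * (pref x a * pref x b)) *
              ((pol x a / (pref x a + η * pol x a)) *
                |(rhat x a - rhat x b) - (rstar x a - rstar x b)|) := by ring
        _ = ρ x * (pref x a * pref x b) *
              ((pol x a / (pref x a + η * pol x a)) *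
                |(rhat x a - rhat x b) - (rstar x a - rstar x b)|) := by rw [hzz]
        _ = _ := by ring
    have hf2 : ∑ p : X × A × A, f p ^ 2 ≤ C := by
      rw [hC, Fintype.sum_prod_type]
      apply Finset.sum_le_sum; intro x _
      rw [Fintype.sum_prod_type, Finset.mul_sum]
      apply Finset.sum_le_sum; intro a _
      have hptw : ∀ b, f (x, a, b) ^ 2 =
          ρ x * ((pol x a / (pref x a + η * pol x a)) ^ 2 * pref x a) * pref x b := by
        intro b
        simp only [hf]
        rw [mul_pow, Real.sq_sqrt (hz (x, a, b))]
        ring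
      rw [Finset.sum_congr rfl fun b _ => hptw b, ← Finset.mul_sum, hprefsum x, mul_one]
      have hkey : (pol x a / (pref x a + η * pol x a)) ^ 2 * pref x a ≤
          (pol x a) ^ 2 / (pref x a + η * pol x a) := by
        rw [div_pow, div_mul_eq_mul_div, div_le_div_iff₀ (pow_pos (hdenpos x a) 2) (hdenpos x a)]
        have h1 : 0 ≤ η * pol x a := mul_nonneg hη (hpol x a)
        nlinarith [sq_nonneg (pol x a), (hdenpos x a).le,
          mul_nonneg (mul_nonneg h1 (sq_nonneg (pol x a))) (hdenpos x a).le]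
      exact mul_le_mul_of_nonneg_left hkey (hρ x)
    have hg2 : ∑ p : X × A × A, g p ^ 2 = eps2 := by
      rw [heps, Fintype.sum_prod_type]
      apply Finset.sum_congr rfl; intro x _
      rw [Fintype.sum_prod_type, Finset.mul_sum]
      apply Finset.sum_congr rfl; intro a _
      rw [Finset.mul_sum]
      apply Finset.sum_congr rfl; intro b _
      simp only [hg]
      rw [mul_pow, Real.sq_sqrt (hz (x, a, b)), sq_abs]
      ring
    have hCS := Finset.sum_mul_sq_le_sq_mul_sq Finset.univ f g
    rw [hfg, hg2] at hCS
    have hT1sq : T1 ^ 2 ≤ C * eps2 :=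
      le_trans hCS (mul_le_mul_of_nonneg_right hf2 heps_nonneg)
    calc T1 = Real.sqrt (T1 ^ 2) := (Real.sqrt_sq hT1nonneg).symm
      _ ≤ Real.sqrt (C * eps2) := Real.sqrt_le_sqrt hT1sq
  -- Conclusion
  rw [step1]
  have hsqrt := Real.sqrt_nonneg (C * eps2)
  have h4 : η * T2 ≤ η * (C * (2 * Rmax)) := mul_le_mul_of_nonneg_left step2 hη
  nlinarith
end

section
/- Consider offline alignment with finite context set X, finite action set A, context distribution ρ with ρ(x) > 0, reference policy πref with πref(a|x) > 0 for all x, a, true reward r* : X×A → [0, Rmax] with Rmax ≥ 1, regularization parameter β > 0, and a finite nonempty policy class Π each of whose members π satisfies π(a|x) > 0 for all x, a. Assume: (realizability) there exist π_β ∈ Π and Z : X → ℝ such that r*(x,a) = β·φ(π_β(a|x)/πref(a|x)) + Z(x) for all x, a, where φ(z) = z + log z; (bounded implicit rewards) there is Vmax ≥ Rmax such that |β·φ(π(a|x)/πref(a|x)) − β·φ(π(b|x)/πref(b|x))| ≤ Vmax for all π ∈ Π, x ∈ X, a, b ∈ A. Let D be a preference dataset of n i.i.d. Bradley–Terry samples.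 Then for every δ ∈ (0,1), with probability at least 1 − δ over the draw of D, every maximizer π̂ over Π of the χPO objective Σ_{(x,a₊,a₋)∈D} log σ( clip_{2Rmax}[ β·φ(π(a₊|x)/πref(a₊|x)) − β·φ(π(a₋|x)/πref(a₋|x)) ] ) satisfies, simultaneously for all policies π*: J(π*) − J(π̂) ≤ 32·Vmax·e^{2Rmax}·√(2·C^{π*}·log(|Π|/δ)/n) + β·C^{π*} + 256·Vmax²·e^{4Rmax}·log(|Π|/δ)/(β·n). Moreover, for any fixed comparator policy π*, if these assumptions hold with β = 32·Vmax·e^{2Rmax}·√(2·log(|Π|/δ)/(n·C^{π*})), then with probability at least 1 − δ, J(π*) − J(π̂) ≤ 68·Vmax·e^{2Rmax}·√(C^{π*}·log(|Π|/δ)/n). -/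
open scoped Classical

/-- The χPO link function `φ(z) = z + log z`. -/
noncomputable def phi (z : ℝ) : ℝ := z + Real.log z

/-- Expected true reward `J(π) = Σ_x ρ(x) Σ_a π(a|x)·r*(x,a)`. -/
noncomputable def Jval {X A : Type*} [Fintype X] [Fintype A]
    (ρ : X → ℝ) (rstar : X → A → ℝ) (pol : X → A → ℝ) : ℝ :=
  ∑ x, ρ x * ∑ a, pol x a * rstar x a

/-- L1 concentrability coefficient `C^π = Σ_x ρ(x) Σ_a π(a|x)²/πref(a|x)`. -/
noncomputable def Cone {X A : Type*} [Fintype X] [Fintype A]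
    (ρ : X → ℝ) (pref pol : X → A → ℝ) : ℝ :=
  ∑ x, ρ x * ∑ a, (pol x a) ^ 2 / pref x a

/-- Probability of observing the Bradley–Terry preference sample `(x, a₊, a₋)`. -/
noncomputable def BTweight {X A : Type*}
    (ρ : X → ℝ) (pref : X → A → ℝ) (rstar : X → A → ℝ) (s : X × A × A) : ℝ :=
  2 * ρ s.1 * pref s.1 s.2.1 * pref s.1 s.2.2 *
    sigmoid (rstar s.1 s.2.1 - rstar s.1 s.2.2)

/-- The χPO objective on a dataset `D` of preference samples. -/
noncomputable def chiPOobj {X A : Type*} {n : ℕ}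
    (pref : X → A → ℝ) (β Rmax : ℝ) (pol : X → A → ℝ)
    (D : Fin n → X × A × A) : ℝ :=
  ∑ i, Real.log (sigmoid (clip (2 * Rmax)
    (β * phi (pol (D i).1 (D i).2.1 / pref (D i).1 (D i).2.1)
      - β * phi (pol (D i).1 (D i).2.2 / pref (D i).1 (D i).2.2))))

open Finset



lemma one_add_exp_pos (u : ℝ) : 0 < 1 + Real.exp u := by positivity

lemma sigmoid_pos (u : ℝ) : 0 < sigmoid u :=
  div_pos (Real.exp_pos u) (one_add_exp_pos u)

lemma sigmoid_lt_one (u : ℝ) : sigmoid u < 1 := by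
  rw [sigmoid, div_lt_one (one_add_exp_pos u)]; linarith

lemma sigmoid_le_one (u : ℝ) : sigmoid u ≤ 1 := (sigmoid_lt_one u).le

lemma sigmoid_neg (u : ℝ) : sigmoid (-u) = 1 - sigmoid u := by
  have h1 := (Real.exp_pos u).ne'
  have h2 := (one_add_exp_pos u).ne'
  rw [sigmoid, sigmoid, Real.exp_neg]
  field_simp
  ring

lemma sigmoid_hasDerivAt (u : ℝ) :
    HasDerivAt sigmoid (Real.exp u / (1 + Real.exp u) ^ 2) u := by
  have h := (Real.hasDerivAt_exp u).div ((hasDerivAt_const u 1).add (Real.hasDerivAt_exp u))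
      (one_add_exp_pos u).ne'
  exact h.congr_deriv (by simp only [Pi.add_apply]; ring)

lemma sigmoid_deriv_ge {R c : ℝ} (hR : 0 ≤ R) (hc : |c| ≤ R) :
    Real.exp (-R) / 4 ≤ Real.exp c / (1 + Real.exp c) ^ 2 := by
  rw [abs_le] at hc
  have h1 : (1 + Real.exp c) ^ 2 ≤ 4 * Real.exp (R + c) := by
    have e1 : (1:ℝ) ≤ Real.exp (R + c) := by
      rw [Real.one_le_exp_iff]; linarith
    have e2 : Real.exp c ≤ Real.exp (R + c) := by
      apply Real.exp_le_exp.2; linarith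
    have e3 : Real.exp c * Real.exp c ≤ Real.exp (R + c) := by
      rw [← Real.exp_add]; apply Real.exp_le_exp.2; linarith
    nlinarith
  have h2 : 0 < (1 + Real.exp c) ^ 2 := by positivity
  rw [div_le_div_iff₀ (by norm_num) h2]
  calc Real.exp (-R) * (1 + Real.exp c) ^ 2 ≤ Real.exp (-R) * (4 * Real.exp (R + c)) := by
        apply mul_le_mul_of_nonneg_left h1 (Real.exp_pos _).le
    _ = Real.exp (-R) * Real.exp (R + c) * 4 := by ring
    _ = Real.exp c * 4 := by rw [← Real.exp_add]; ring_nf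

lemma sigmoid_gap {R u v : ℝ} (hR : 0 ≤ R) (hv : -R ≤ v) (hu : u ≤ R) (hvu : v ≤ u) :
    (u - v) * (Real.exp (-R) / 4) ≤ sigmoid u - sigmoid v := by
  rcases eq_or_lt_of_le hvu with h | h
  · subst h; simp
  · obtain ⟨c, hc, hslope⟩ := exists_hasDerivAt_eq_slope sigmoid
      (fun t => Real.exp t / (1 + Real.exp t) ^ 2) h
      (fun t _ => (sigmoid_hasDerivAt t).continuousAt.continuousWithinAt)
      (fun t _ => sigmoid_hasDerivAt t)
    have hcR : |c| ≤ R := by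
      rw [abs_le]; exact ⟨by linarith [hc.1], by linarith [hc.2]⟩
    have := sigmoid_deriv_ge hR hcR
    rw [hslope] at this
    rw [div_le_div_iff₀ (by norm_num) (by linarith : (0:ℝ) < u - v)] at this
    nlinarith

lemma clip_of_mem {R z : ℝ} (h1 : -R ≤ z) (h2 : z ≤ R) : clip R z = z := by
  rw [clip, min_eq_right h2, max_eq_right h1]

lemma clip_neg {R : ℝ} (hR : 0 ≤ R) (z : ℝ) : clip R (-z) = -clip R z := by
  rcases le_total z (-R) with h | h
  · rw [clip, clip, min_eq_right (by linarith : z ≤ R), max_eq_left h,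
      min_eq_left (by linarith : R ≤ -z), max_eq_right (by linarith : -R ≤ R), neg_neg]
  · rcases le_total z R with h' | h'
    · rw [clip_of_mem h h', clip_of_mem (by linarith : -R ≤ -z) (by linarith : -z ≤ R)]
    · rw [clip, clip, min_eq_left h', max_eq_right (by linarith : -R ≤ R),
        min_eq_right (by linarith : -z ≤ R), max_eq_left (by linarith : -z ≤ -R)]

lemma clip_mem {R z : ℝ} (hR : 0 ≤ R) : -R ≤ clip R z ∧ clip R z ≤ R := by
  constructor
  · exact le_max_left _ _
  · rw [clip, max_le_iff]; exact ⟨by linarith, min_le_left _ _⟩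

lemma key_pointwise {R V Δ u : ℝ} (hR : 1 ≤ R) (hV : R ≤ V)
    (hΔ : |Δ| ≤ V) (hu : |u| ≤ R) :
    |Δ - u| ≤ 8 * V * Real.exp (2 * R) * |sigmoid (clip (2 * R) Δ) - sigmoid u| := by
  rw [abs_le] at hΔ hu
  have hR2 : (0:ℝ) ≤ 2 * R := by linarith
  have hexp : (1:ℝ) ≤ Real.exp (2 * R) := Real.one_le_exp (by linarith)
  have hexppos := Real.exp_pos (2*R)
  have hprod : Real.exp (-(2*R)) * Real.exp (2*R) = 1 := by
    rw [← Real.exp_add]; simp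
  rcases le_total Δ (2*R) with h2 | h2
  · rcases le_total (-(2*R)) Δ with h1 | h1
    · -- no clipping
      rw [clip_of_mem h1 h2]
      rcases le_total u Δ with hc | hc
      · have hg := sigmoid_gap hR2 (by linarith : -(2*R) ≤ u) h2 hc
        have hS : 0 ≤ sigmoid Δ - sigmoid u := by
          nlinarith [Real.exp_pos (-(2*R))]
        have habs1 : |Δ - u| = Δ - u := abs_of_nonneg (by linarith)
        have habs2 : |sigmoid Δ - sigmoid u| = sigmoid Δ - sigmoid u := abs_of_nonneg hS
        rw [habs1, habs2]
        have h4 := mul_le_mul_of_nonneg_right hg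
          (show (0:ℝ) ≤ 4 * Real.exp (2*R) by positivity)
        nlinarith [mul_nonneg (mul_nonneg (show (0:ℝ) ≤ 8*V - 4 by linarith) hexppos.le) hS]
      · have hg := sigmoid_gap hR2 h1 (by linarith : u ≤ 2*R) hc
        have hS : 0 ≤ sigmoid u - sigmoid Δ := by
          nlinarith [Real.exp_pos (-(2*R))]
        have habs1 : |Δ - u| = u - Δ := by rw [abs_sub_comm]; exact abs_of_nonneg (by linarith)
        have habs2 : |sigmoid Δ - sigmoid u| = sigmoid u - sigmoid Δ := by
          rw [abs_sub_comm]; exact abs_of_nonneg hS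
        rw [habs1, habs2]
        have h4 := mul_le_mul_of_nonneg_right hg
          (show (0:ℝ) ≤ 4 * Real.exp (2*R) by positivity)
        nlinarith [mul_nonneg (mul_nonneg (show (0:ℝ) ≤ 8*V - 4 by linarith) hexppos.le) hS]
    · -- Δ < -(2R), clip = -2R
      have hclip : clip (2*R) Δ = -(2*R) := by
        rw [clip, min_eq_right (by linarith), max_eq_left (by linarith)]
      rw [hclip]
      have hgap := sigmoid_gap hR2 (by linarith : -(2*R) ≤ -(2*R)) (by linarith : u ≤ 2*R) (by linarith : -(2*R) ≤ u)
      have hs : sigmoid u - sigmoid (-(2*R)) ≥ R * (Real.exp (-(2*R)) / 4) := by nlinarith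
      have habs2 : |sigmoid (-(2*R)) - sigmoid u| = sigmoid u - sigmoid (-(2*R)) := by
        rw [abs_sub_comm]; apply abs_of_nonneg; nlinarith [Real.exp_pos (-(2*R))]
      have habs1 : |Δ - u| = u - Δ := by rw [abs_sub_comm]; exact abs_of_nonneg (by linarith)
      rw [habs1, habs2]
      have h2V : u - Δ ≤ 2 * V := by linarith
      have hkey : 2 * V ≤ 8 * V * Real.exp (2*R) * (R * (Real.exp (-(2*R)) / 4)) := by
        have : 8 * V * Real.exp (2*R) * (R * (Real.exp (-(2*R)) / 4))
            = 2 * V * R * (Real.exp (2*R) * Real.exp (-(2*R))) := by ring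
        rw [this, ← Real.exp_add]; simp only [add_neg_cancel, Real.exp_zero]
        nlinarith
      calc u - Δ ≤ 2 * V := h2V
        _ ≤ 8 * V * Real.exp (2*R) * (R * (Real.exp (-(2*R)) / 4)) := hkey
        _ ≤ 8 * V * Real.exp (2*R) * (sigmoid u - sigmoid (-(2*R))) := by
            apply mul_le_mul_of_nonneg_left hs; nlinarith
  · -- Δ > 2R, clip = 2R
    have hclip : clip (2*R) Δ = 2*R := by
      rw [clip, min_eq_left (by linarith), max_eq_right (by linarith)]
    rw [hclip]
    have hgap := sigmoid_gap hR2 (by linarith : -(2*R) ≤ u) (le_refl (2*R)) (by linarith : u ≤ 2*R)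
    have hs : sigmoid (2*R) - sigmoid u ≥ R * (Real.exp (-(2*R)) / 4) := by nlinarith
    have habs2 : |sigmoid (2*R) - sigmoid u| = sigmoid (2*R) - sigmoid u := by
      apply abs_of_nonneg; nlinarith [Real.exp_pos (-(2*R))]
    have habs1 : |Δ - u| = Δ - u := abs_of_nonneg (by linarith)
    rw [habs1, habs2]
    have h2V : Δ - u ≤ 2 * V := by linarith
    have hkey : 2 * V ≤ 8 * V * Real.exp (2*R) * (R * (Real.exp (-(2*R)) / 4)) := by
      have : 8 * V * Real.exp (2*R) * (R * (Real.exp (-(2*R)) / 4))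
          = 2 * V * R * (Real.exp (2*R) * Real.exp (-(2*R))) := by ring
      rw [this, ← Real.exp_add]; simp only [add_neg_cancel, Real.exp_zero]
      nlinarith
    calc Δ - u ≤ 2 * V := h2V
      _ ≤ 8 * V * Real.exp (2*R) * (R * (Real.exp (-(2*R)) / 4)) := hkey
      _ ≤ 8 * V * Real.exp (2*R) * (sigmoid (2*R) - sigmoid u) := by
          apply mul_le_mul_of_nonneg_left hs; nlinarith

lemma sum_prod_dataset {Z : Type*} [Fintype Z] (n : ℕ) (F : Z → ℝ) :
    ∑ D : Fin n → Z, ∏ i, F (D i) = (∑ z, F z) ^ n := by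
  classical
  rw [show ((∑ z, F z) ^ n) = ∏ _i : Fin n, ∑ z, F z from by simp [Finset.prod_const],
    Finset.prod_univ_sum]
  rw [Fintype.piFinset_univ]

lemma BTmod_sum_one {X A : Type*} [Fintype X] [Fintype A]
    (ρ : X → ℝ) (hρsum : ∑ x, ρ x = 1)
    (pref : X → A → ℝ) (hprefsum : ∀ x, ∑ a, pref x a = 1)
    (u : X × A × A → ℝ) (hanti : ∀ x a b, u (x, b, a) = -u (x, a, b)) :
    ∑ z : X × A × A, 2 * ρ z.1 * pref z.1 z.2.1 * pref z.1 z.2.2 * sigmoid (u z) = 1 := by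
  rw [Fintype.sum_prod_type]
  have hx : ∀ x : X, ∑ y : A × A, 2 * ρ x * pref x y.1 * pref x y.2 * sigmoid (u (x, y)) = ρ x := by
    intro x
    have h1 : ∑ y : A × A, ρ x * pref x y.1 * pref x y.2 * sigmoid (u (x, y))
        = ∑ y : A × A, ρ x * pref x y.1 * pref x y.2 * (1 - sigmoid (u (x, y))) := by
      have e1 : ∑ y : A × A, ρ x * pref x y.1 * pref x y.2 * sigmoid (u (x, y))
          = ∑ y : A × A, ρ x * pref x y.2 * pref x y.1 * sigmoid (u (x, y.2, y.1)) := by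
        simp only [Fintype.sum_prod_type]
        exact Finset.sum_comm
      rw [e1]
      apply Finset.sum_congr rfl
      intro y _
      rw [hanti x y.1 y.2, sigmoid_neg]
      ring
    have h2 : ∑ y : A × A, ρ x * pref x y.1 * pref x y.2 = ρ x := by
      rw [Fintype.sum_prod_type]
      have : ∀ a, ∑ b, ρ x * pref x a * pref x b = ρ x * pref x a := by
        intro a; rw [← Finset.mul_sum, hprefsum x, mul_one]
      rw [Finset.sum_congr rfl (fun a _ => this a), ← Finset.mul_sum, hprefsum x, mul_one]
    have h3 : (∑ y : A × A, ρ x * pref x y.1 * pref x y.2 * sigmoid (u (x, y)))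
        + (∑ y : A × A, ρ x * pref x y.1 * pref x y.2 * (1 - sigmoid (u (x, y)))) = ρ x := by
      rw [← Finset.sum_add_distrib]
      rw [show (∑ y : A × A, (ρ x * pref x y.1 * pref x y.2 * sigmoid (u (x, y))
        + ρ x * pref x y.1 * pref x y.2 * (1 - sigmoid (u (x, y)))))
        = ∑ y : A × A, ρ x * pref x y.1 * pref x y.2 from
          Finset.sum_congr rfl (fun y _ => by ring), h2]
    calc ∑ y : A × A, 2 * ρ x * pref x y.1 * pref x y.2 * sigmoid (u (x, y))
        = (∑ y : A × A, ρ x * pref x y.1 * pref x y.2 * sigmoid (u (x, y)))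
          + (∑ y : A × A, ρ x * pref x y.1 * pref x y.2 * sigmoid (u (x, y))) := by
          rw [← Finset.sum_add_distrib]
          exact Finset.sum_congr rfl (fun y _ => by ring)
      _ = ρ x := by rw [h1] at *; nth_rewrite 2 [h1]; exact h3
  rw [Finset.sum_congr rfl (fun x _ => hx x), hρsum]

lemma chernoff_bound {Z : Type*} [Fintype Z] (n : ℕ) (w m : Z → ℝ)
    (hw : ∀ z, 0 < w z) (hm : ∀ z, 0 < m z)
    (cond : (Fin n → Z) → Prop) [DecidablePred cond]
    (hcond : ∀ D, cond D → ∏ i, w (D i) ≤ ∏ i, m (D i)) :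
    ∑ D : Fin n → Z, (if cond D then ∏ i, w (D i) else 0)
      ≤ (∑ z, Real.sqrt (w z * m z)) ^ n := by
  rw [← sum_prod_dataset]
  apply Finset.sum_le_sum
  intro D _
  have hnn : (0:ℝ) ≤ ∏ i, Real.sqrt (w (D i) * m (D i)) :=
    Finset.prod_nonneg (fun i _ => Real.sqrt_nonneg _)
  split_ifs with h
  · have hww : (0:ℝ) ≤ ∏ i, w (D i) := Finset.prod_nonneg (fun i _ => (hw _).le)
    have hsq : (∏ i, w (D i)) ^ 2 ≤ (∏ i, Real.sqrt (w (D i) * m (D i))) ^ 2 := by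
      rw [← Finset.prod_pow, ← Finset.prod_pow]
      have : ∀ i : Fin n, Real.sqrt (w (D i) * m (D i)) ^ 2 = w (D i) * m (D i) := by
        intro i; exact Real.sq_sqrt (mul_nonneg (hw _).le (hm _).le)
      rw [Finset.prod_congr rfl (fun i _ => this i), Finset.prod_mul_distrib]
      have h2 : (∏ i, w (D i)) * (∏ i, w (D i)) ≤ (∏ i, w (D i)) * (∏ i, m (D i)) :=
        mul_le_mul_of_nonneg_left (hcond D h) hww
      calc ∏ i, w (D i) ^ 2 = (∏ i, w (D i)) * (∏ i, w (D i)) := by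
            rw [← Finset.prod_mul_distrib]; exact Finset.prod_congr rfl (fun i _ => sq (w (D i)) ▸ by ring)
        _ ≤ _ := h2
    calc (∏ i, w (D i)) = Real.sqrt ((∏ i, w (D i))^2) := (Real.sqrt_sq hww).symm
      _ ≤ Real.sqrt ((∏ i, Real.sqrt (w (D i) * m (D i)))^2) := Real.sqrt_le_sqrt hsq
      _ = _ := Real.sqrt_sq hnn
  · exact hnn

lemma global_CS {Z : Type*} [Fintype Z] (ν q t : Z → ℝ) (hν : ∀ z, 0 ≤ ν z) :
    ∑ z, ν z * q z * t z ≤ Real.sqrt ((∑ z, ν z * q z ^ 2) * (∑ z, ν z * t z ^ 2)) := by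
  have key := Finset.sum_mul_sq_le_sq_mul_sq Finset.univ
    (fun z => Real.sqrt (ν z) * q z) (fun z => Real.sqrt (ν z) * t z)
  have h1 : ∀ z : Z, (Real.sqrt (ν z) * q z) * (Real.sqrt (ν z) * t z) = ν z * q z * t z := by
    intro z
    have h := Real.mul_self_sqrt (hν z)
    rw [show (Real.sqrt (ν z) * q z) * (Real.sqrt (ν z) * t z)
      = (Real.sqrt (ν z) * Real.sqrt (ν z)) * (q z * t z) from by ring, h]
    ring
  have h2 : ∀ z : Z, (Real.sqrt (ν z) * q z) ^ 2 = ν z * q z ^ 2 := by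
    intro z; rw [mul_pow, Real.sq_sqrt (hν z)]
  have h3 : ∀ z : Z, (Real.sqrt (ν z) * t z) ^ 2 = ν z * t z ^ 2 := by
    intro z; rw [mul_pow, Real.sq_sqrt (hν z)]
  rw [Finset.sum_congr rfl (fun z _ => h1 z), Finset.sum_congr rfl (fun z _ => h2 z),
    Finset.sum_congr rfl (fun z _ => h3 z)] at key
  have hs : ∑ z, ν z * q z * t z ≤ |∑ z, ν z * q z * t z| := le_abs_self _
  calc ∑ z, ν z * q z * t z ≤ |∑ z, ν z * q z * t z| := hs
    _ = Real.sqrt ((∑ z, ν z * q z * t z)^2) := (Real.sqrt_sq_eq_abs _).symm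
    _ ≤ _ := Real.sqrt_le_sqrt key

lemma amgm_sqrt {a b : ℝ} (ha : 0 ≤ a) (hb : 0 ≤ b) :
    Real.sqrt (a * b) ≤ a / 2 + b / 2 := by
  nlinarith [sq_nonneg (Real.sqrt a - Real.sqrt b), Real.sq_sqrt ha, Real.sq_sqrt hb,
    Real.sqrt_mul ha b, Real.sqrt_nonneg a, Real.sqrt_nonneg b,
    Real.sqrt_nonneg (a*b)]

lemma eq_of_sq_eq {a b : ℝ} (ha : 0 ≤ a) (hb : 0 ≤ b) (h : a ^ 2 = b ^ 2) : a = b := by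
  nlinarith

lemma hellinger_sq {Z : Type*} [Fintype Z] (base σ1 σ2 : Z → ℝ)
    (hbase : ∀ z, 0 ≤ base z)
    (h1 : ∀ z, 0 ≤ σ1 z) (h1' : ∀ z, σ1 z ≤ 1)
    (h2 : ∀ z, 0 ≤ σ2 z) (h2' : ∀ z, σ2 z ≤ 1)
    (hs1 : ∑ z, 2 * base z * σ1 z = 1) (hs2 : ∑ z, 2 * base z * σ2 z = 1) :
    ∑ z, base z * (σ1 z - σ2 z) ^ 2
      ≤ 4 * (1 - ∑ z, Real.sqrt ((2 * base z * σ1 z) * (2 * base z * σ2 z))) := by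
  have hpt : ∀ z, base z * (σ1 z - σ2 z) ^ 2
      ≤ 2 * ((2 * base z * σ1 z) + (2 * base z * σ2 z)
        - 2 * Real.sqrt ((2 * base z * σ1 z) * (2 * base z * σ2 z))) := by
    intro z
    set s1 := Real.sqrt (σ1 z) with hs1def
    set s2 := Real.sqrt (σ2 z) with hs2def
    have e1 : s1 ^ 2 = σ1 z := Real.sq_sqrt (h1 z)
    have e2 : s2 ^ 2 = σ2 z := Real.sq_sqrt (h2 z)
    have l1 : s1 ≤ 1 := Real.sqrt_le_one.mpr (h1' z)
    have l2 : s2 ≤ 1 := Real.sqrt_le_one.mpr (h2' z)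
    have n1 : 0 ≤ s1 := Real.sqrt_nonneg _
    have n2 : 0 ≤ s2 := Real.sqrt_nonneg _
    have hroot : Real.sqrt ((2 * base z * σ1 z) * (2 * base z * σ2 z))
        = 2 * base z * (s1 * s2) := by
      rw [show (2 * base z * σ1 z) * (2 * base z * σ2 z)
        = (2 * base z * (s1 * s2)) ^ 2 from by
          rw [show (2 * base z * (s1 * s2)) ^ 2 = (2 * base z) ^ 2 * (s1 ^ 2 * s2 ^ 2) from by
            ring, e1, e2]
          ring]
      exact Real.sqrt_sq (mul_nonneg (by linarith [hbase z] : (0:ℝ) ≤ 2 * base z)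
        (mul_nonneg n1 n2))
    rw [hroot, ← e1, ← e2]
    have key : (s1 + s2) ^ 2 ≤ 4 := by nlinarith
    have hb := hbase z
    nlinarith [mul_nonneg hb (sq_nonneg (s1 - s2)),
      mul_le_mul_of_nonneg_left key (mul_nonneg hb (sq_nonneg (s1 - s2)))]
  calc ∑ z, base z * (σ1 z - σ2 z) ^ 2
      ≤ ∑ z, 2 * ((2 * base z * σ1 z) + (2 * base z * σ2 z)
          - 2 * Real.sqrt ((2 * base z * σ1 z) * (2 * base z * σ2 z))) :=
        Finset.sum_le_sum fun z _ => hpt z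
    _ = ∑ z, (2 * (2 * base z * σ1 z) + 2 * (2 * base z * σ2 z)
          - 4 * Real.sqrt ((2 * base z * σ1 z) * (2 * base z * σ2 z))) :=
        Finset.sum_congr rfl fun z _ => by ring
    _ = (∑ z, 2 * (2 * base z * σ1 z)) + (∑ z, 2 * (2 * base z * σ2 z))
          - ∑ z, 4 * Real.sqrt ((2 * base z * σ1 z) * (2 * base z * σ2 z)) := by
        rw [Finset.sum_sub_distrib, Finset.sum_add_distrib]
    _ = 2 * (∑ z, 2 * base z * σ1 z) + 2 * (∑ z, 2 * base z * σ2 z)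
          - 4 * ∑ z, Real.sqrt ((2 * base z * σ1 z) * (2 * base z * σ2 z)) := by
        rw [← Finset.mul_sum, ← Finset.mul_sum, ← Finset.mul_sum]
    _ = 4 * (1 - ∑ z, Real.sqrt ((2 * base z * σ1 z) * (2 * base z * σ2 z))) := by
        rw [hs1, hs2]; ring

lemma phi_part {A : Type*} [Fintype A]
    (pref p pstar : A → ℝ) (hpref : ∀ a, 0 < pref a) (hprefsum : ∑ a, pref a = 1)
    (hp : ∀ a, 0 < p a) (hpsum : ∑ a, p a = 1)
    (hpstar : ∀ a, 0 ≤ pstar a) (hpstarsum : ∑ a, pstar a = 1)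
    (β : ℝ) (hβ : 0 < β) :
    (∑ a, pstar a * (β * phi (p a / pref a))) - (∑ a, p a * (β * phi (p a / pref a)))
      ≤ β * ((∑ a, pstar a ^ 2 / pref a) - (∑ a, p a ^ 2 / pref a) / 2) := by
  have hCs0 : 0 ≤ ∑ a, pstar a ^ 2 / pref a :=
    Finset.sum_nonneg fun a _ => div_nonneg (sq_nonneg _) (hpref a).le
  -- A1
  have hA1 : ∑ a, pstar a * (p a / pref a)
      ≤ (∑ a, pstar a ^ 2 / pref a) / 2 + (∑ a, p a ^ 2 / pref a) / 2 := by
    have := Finset.sum_le_sum (s := univ)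
      (f := fun a => pstar a * (p a / pref a))
      (g := fun a => pstar a ^ 2 / pref a / 2 + p a ^ 2 / pref a / 2) ?_
    · calc ∑ a, pstar a * (p a / pref a)
          ≤ ∑ a, (pstar a ^ 2 / pref a / 2 + p a ^ 2 / pref a / 2) := this
        _ = (∑ a, pstar a ^ 2 / pref a) / 2 + (∑ a, p a ^ 2 / pref a) / 2 := by
            rw [Finset.sum_add_distrib, ← Finset.sum_div, ← Finset.sum_div]
    · intro a _
      show pstar a * (p a / pref a) ≤ pstar a ^ 2 / pref a / 2 + p a ^ 2 / pref a / 2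
      have h := sq_nonneg (pstar a - p a)
      have e1 : pstar a * (p a / pref a) = (pstar a * p a) / pref a := by ring
      have e2 : pstar a ^ 2 / pref a / 2 + p a ^ 2 / pref a / 2
          = (pstar a ^ 2 / 2 + p a ^ 2 / 2) / pref a := by ring
      rw [e1, e2]
      exact div_le_div_of_nonneg_right (by nlinarith) (hpref a).le
  -- A2
  have hA2 : ∑ a, pstar a * Real.log (p a / pref a) ≤ (∑ a, pstar a ^ 2 / pref a) / 2 := by
    have hlog : ∀ a, Real.log (p a / pref a) ≤ 2 * Real.sqrt (p a / pref a) - 2 := by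
      intro a
      have hpos : 0 < p a / pref a := div_pos (hp a) (hpref a)
      have h1 : Real.log (Real.sqrt (p a / pref a)) ≤ Real.sqrt (p a / pref a) - 1 :=
        Real.log_le_sub_one_of_pos (Real.sqrt_pos.2 hpos)
      have h2 : Real.log (Real.sqrt (p a / pref a)) = Real.log (p a / pref a) / 2 :=
        Real.log_sqrt hpos.le
      linarith
    have step1 : ∑ a, pstar a * Real.log (p a / pref a)
        ≤ 2 * (∑ a, pstar a * Real.sqrt (p a / pref a)) - 2 := by
      calc ∑ a, pstar a * Real.log (p a / pref a)
          ≤ ∑ a, pstar a * (2 * Real.sqrt (p a / pref a) - 2) :=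
            Finset.sum_le_sum fun a _ => mul_le_mul_of_nonneg_left (hlog a) (hpstar a)
        _ = 2 * (∑ a, pstar a * Real.sqrt (p a / pref a)) - 2 * ∑ a, pstar a := by
            rw [Finset.mul_sum, Finset.mul_sum, ← Finset.sum_sub_distrib]
            exact Finset.sum_congr rfl fun a _ => by ring
        _ = 2 * (∑ a, pstar a * Real.sqrt (p a / pref a)) - 2 := by rw [hpstarsum]; ring
    have hsq : (∑ a, pstar a * Real.sqrt (p a / pref a)) ^ 2
        ≤ ∑ a, pstar a ^ 2 / pref a := by
      have key := Finset.sum_mul_sq_le_sq_mul_sq univ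
        (fun a => pstar a / Real.sqrt (pref a)) (fun a => Real.sqrt (p a))
      have h1 : ∀ a : A, pstar a / Real.sqrt (pref a) * Real.sqrt (p a)
          = pstar a * Real.sqrt (p a / pref a) := by
        intro a
        rw [Real.sqrt_div (hp a).le]
        ring
      have h2 : ∀ a : A, (pstar a / Real.sqrt (pref a)) ^ 2 = pstar a ^ 2 / pref a := by
        intro a
        rw [div_pow, Real.sq_sqrt (hpref a).le]
      have h3 : ∀ a : A, (Real.sqrt (p a)) ^ 2 = p a := fun a => Real.sq_sqrt (hp a).le
      rw [Finset.sum_congr rfl fun a _ => h1 a, Finset.sum_congr rfl fun a _ => h2 a,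
        Finset.sum_congr rfl fun a _ => h3 a, hpsum, mul_one] at key
      exact key
    have hfin : ∑ a, pstar a * Real.sqrt (p a / pref a)
        ≤ Real.sqrt (∑ a, pstar a ^ 2 / pref a) := by
      have hnn : 0 ≤ ∑ a, pstar a * Real.sqrt (p a / pref a) :=
        Finset.sum_nonneg fun a _ => mul_nonneg (hpstar a) (Real.sqrt_nonneg _)
      calc ∑ a, pstar a * Real.sqrt (p a / pref a)
          = Real.sqrt ((∑ a, pstar a * Real.sqrt (p a / pref a)) ^ 2) :=
            (Real.sqrt_sq hnn).symm
        _ ≤ _ := Real.sqrt_le_sqrt hsq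
    nlinarith [sq_nonneg (Real.sqrt (∑ a, pstar a ^ 2 / pref a) - 2),
      Real.sq_sqrt hCs0, Real.sqrt_nonneg (∑ a, pstar a ^ 2 / pref a)]
  -- A3
  have hA3 : ∑ a, p a * (p a / pref a) = ∑ a, p a ^ 2 / pref a :=
    Finset.sum_congr rfl fun a _ => by ring
  -- A4
  have hA4 : 0 ≤ ∑ a, p a * Real.log (p a / pref a) := by
    have hpt : ∀ a, p a - pref a ≤ p a * Real.log (p a / pref a) := by
      intro a
      have h1 : Real.log (pref a / p a) ≤ pref a / p a - 1 :=
        Real.log_le_sub_one_of_pos (div_pos (hpref a) (hp a))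
      have h2 : Real.log (p a / pref a) = -Real.log (pref a / p a) := by
        rw [← Real.log_inv, inv_div]
      have h3 := mul_le_mul_of_nonneg_left h1 (hp a).le
      have h4 : p a * (pref a / p a - 1) = pref a - p a := by
        field_simp [(hp a).ne']
      rw [h2]
      nlinarith
    calc (0:ℝ) = (∑ a, p a) - ∑ a, pref a := by rw [hpsum, hprefsum]; ring
      _ = ∑ a, (p a - pref a) := by rw [Finset.sum_sub_distrib]
      _ ≤ ∑ a, p a * Real.log (p a / pref a) := Finset.sum_le_sum fun a _ => hpt a
  -- expand phi
  have hexp : ∀ q : A → ℝ, ∑ a, q a * (β * phi (p a / pref a))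
      = β * ((∑ a, q a * (p a / pref a)) + ∑ a, q a * Real.log (p a / pref a)) := by
    intro q
    rw [mul_add, Finset.mul_sum, Finset.mul_sum, ← Finset.sum_add_distrib]
    exact Finset.sum_congr rfl fun a _ => by rw [phi]; ring
  rw [hexp pstar, hexp p]
  have h5 : (∑ a, pstar a * (p a / pref a)) + (∑ a, pstar a * Real.log (p a / pref a))
      - ((∑ a, p a * (p a / pref a)) + ∑ a, p a * Real.log (p a / pref a))
      ≤ (∑ a, pstar a ^ 2 / pref a) - (∑ a, p a ^ 2 / pref a) / 2 := by
    rw [hA3] at *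
    linarith
  nlinarith [h5]

lemma det_core {X A : Type*} [Fintype X] [Fintype A]
    (ρ : X → ℝ) (hρ : ∀ x, 0 ≤ ρ x)
    (pref : X → A → ℝ) (hpref : ∀ x a, 0 < pref x a) (hprefsum : ∀ x, ∑ a, pref x a = 1)
    (Rmax : ℝ) (hRmax : 1 ≤ Rmax)
    (rstar : X → A → ℝ) (hrstar : ∀ x a, rstar x a ∈ Set.Icc (0:ℝ) Rmax)
    (β : ℝ) (hβ : 0 < β)
    (Vmax : ℝ) (hV : Rmax ≤ Vmax)
    (f : X → A → ℝ) (hfd : ∀ x a b, |f x a - f x b| ≤ Vmax)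
    (p : X → A → ℝ) (hp : ∀ x a, 0 < p x a) (hpsum : ∀ x, ∑ a, p x a = 1)
    (pstar : X → A → ℝ) (hpstar : ∀ x a, 0 ≤ pstar x a) (hpstarsum : ∀ x, ∑ a, pstar x a = 1)
    (hphi : ∀ x, (∑ a, pstar x a * f x a) - (∑ a, p x a * f x a)
      ≤ β * ((∑ a, pstar x a ^ 2 / pref x a) - (∑ a, p x a ^ 2 / pref x a) / 2))
    (ε2 : ℝ) (hε2 : 0 ≤ ε2)
    (hstat : ∑ z : X × A × A, (ρ z.1 * pref z.1 z.2.1 * pref z.1 z.2.2) *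
        (sigmoid (clip (2 * Rmax) (f z.1 z.2.1 - f z.1 z.2.2))
          - sigmoid (rstar z.1 z.2.1 - rstar z.1 z.2.2)) ^ 2 ≤ ε2) :
    Jval ρ rstar pstar - Jval ρ rstar p ≤
      8 * Vmax * Real.exp (2 * Rmax) * Real.sqrt (Cone ρ pref pstar * ε2)
      + β * Cone ρ pref pstar + 32 * Vmax ^ 2 * Real.exp (2 * Rmax) ^ 2 * ε2 / β := by
  classical
  set κ := 8 * Vmax * Real.exp (2 * Rmax) with hκdef
  have hEpos := Real.exp_pos (2 * Rmax)
  have hVpos : (0:ℝ) < Vmax := by linarith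
  have hκ : 0 ≤ κ := by positivity
  set t : X × A × A → ℝ := fun z =>
    |sigmoid (clip (2 * Rmax) (f z.1 z.2.1 - f z.1 z.2.2))
      - sigmoid (rstar z.1 z.2.1 - rstar z.1 z.2.2)| with htdef
  set ν : X × A × A → ℝ := fun z => ρ z.1 * pref z.1 z.2.1 * pref z.1 z.2.2 with hνdef
  have hνnn : ∀ z, 0 ≤ ν z := fun z =>
    mul_nonneg (mul_nonneg (hρ _) (hpref _ _).le) (hpref _ _).le
  have htnn : ∀ z, 0 ≤ t z := fun z => abs_nonneg _
  -- statistical error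
  have hstat' : ∑ z : X × A × A, ν z * t z ^ 2 ≤ ε2 := by
    calc ∑ z : X × A × A, ν z * t z ^ 2
        = ∑ z : X × A × A, (ρ z.1 * pref z.1 z.2.1 * pref z.1 z.2.2) *
            (sigmoid (clip (2 * Rmax) (f z.1 z.2.1 - f z.1 z.2.2))
              - sigmoid (rstar z.1 z.2.1 - rstar z.1 z.2.2)) ^ 2 :=
          Finset.sum_congr rfl fun z _ => by rw [htdef, hνdef]; simp [sq_abs]
      _ ≤ ε2 := hstat
  -- pointwise key inequality
  have hkey : ∀ x a b, |(f x a - rstar x a) - (f x b - rstar x b)| ≤ κ * t (x, a, b) := by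
    intro x a b
    have h2 : |rstar x a - rstar x b| ≤ Rmax := by
      have ha := hrstar x a; have hb := hrstar x b
      rw [Set.mem_Icc] at ha hb
      rw [abs_le]; constructor <;> [linarith [ha.1, hb.2]; linarith [ha.2, hb.1]]
    have h3 := key_pointwise hRmax hV (hfd x a b) h2
    have h4 : (f x a - rstar x a) - (f x b - rstar x b)
        = (f x a - f x b) - (rstar x a - rstar x b) := by ring
    rw [h4]
    exact h3
  -- Cauchy–Schwarz bounds
  have hq2 : ∀ pol : X → A → ℝ,
      ∑ z : X × A × A, ν z * (pol z.1 z.2.1 / pref z.1 z.2.1) ^ 2 = Cone ρ pref pol := by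
    intro pol
    rw [Cone, Fintype.sum_prod_type]
    apply Finset.sum_congr rfl; intro x _
    rw [Fintype.sum_prod_type, Finset.mul_sum]
    apply Finset.sum_congr rfl; intro a _
    have : ∀ b, ν (x, a, b) * (pol x a / pref x a) ^ 2
        = (ρ x * (pol x a ^ 2 / pref x a)) * pref x b := by
      intro b
      rw [hνdef]
      have hne := (hpref x a).ne'
      field_simp
    rw [Finset.sum_congr rfl fun b _ => this b, ← Finset.mul_sum, hprefsum x, mul_one]
  have hConeNN : ∀ pol : X → A → ℝ, 0 ≤ Cone ρ pref pol := by
    intro pol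
    rw [Cone]
    exact Finset.sum_nonneg fun x _ => mul_nonneg (hρ x)
      (Finset.sum_nonneg fun a _ => div_nonneg (sq_nonneg _) (hpref x a).le)
  have hCS : ∀ pol : X → A → ℝ,
      ∑ z : X × A × A, ν z * (pol z.1 z.2.1 / pref z.1 z.2.1) * t z
        ≤ Real.sqrt (Cone ρ pref pol * ε2) := by
    intro pol
    calc ∑ z : X × A × A, ν z * (pol z.1 z.2.1 / pref z.1 z.2.1) * t z
        ≤ Real.sqrt ((∑ z : X × A × A, ν z * (pol z.1 z.2.1 / pref z.1 z.2.1) ^ 2) *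
            (∑ z : X × A × A, ν z * t z ^ 2)) :=
          global_CS ν (fun z => pol z.1 z.2.1 / pref z.1 z.2.1) t hνnn
      _ ≤ Real.sqrt (Cone ρ pref pol * ε2) := by
          apply Real.sqrt_le_sqrt
          rw [hq2 pol]
          exact mul_le_mul_of_nonneg_left hstat' (hConeNN pol)
  -- decomposition identity
  have hJ : Jval ρ rstar pstar - Jval ρ rstar p
      = (∑ x, ρ x * ((∑ a, pstar x a * f x a) - ∑ a, p x a * f x a))
        + ∑ x, ρ x * ((∑ a, p x a * (f x a - rstar x a))
            - ∑ a, pstar x a * (f x a - rstar x a)) := by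
    rw [Jval, Jval, ← Finset.sum_sub_distrib, ← Finset.sum_add_distrib]
    apply Finset.sum_congr rfl; intro x _
    have e1 : ∑ a, pstar x a * (f x a - rstar x a)
        = (∑ a, pstar x a * f x a) - ∑ a, pstar x a * rstar x a := by
      rw [← Finset.sum_sub_distrib]; exact Finset.sum_congr rfl fun a _ => by ring
    have e2 : ∑ a, p x a * (f x a - rstar x a)
        = (∑ a, p x a * f x a) - ∑ a, p x a * rstar x a := by
      rw [← Finset.sum_sub_distrib]; exact Finset.sum_congr rfl fun a _ => by ring
    rw [e1, e2]; ring
  -- regularization part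
  have hE2 : ∑ x, ρ x * ((∑ a, pstar x a * f x a) - ∑ a, p x a * f x a)
      ≤ β * Cone ρ pref pstar - β / 2 * Cone ρ pref p := by
    calc ∑ x, ρ x * ((∑ a, pstar x a * f x a) - ∑ a, p x a * f x a)
        ≤ ∑ x, (β * (ρ x * ∑ a, pstar x a ^ 2 / pref x a)
            - β / 2 * (ρ x * ∑ a, p x a ^ 2 / pref x a)) := by
          apply Finset.sum_le_sum; intro x _
          have h := mul_le_mul_of_nonneg_left (hphi x) (hρ x)
          calc ρ x * ((∑ a, pstar x a * f x a) - ∑ a, p x a * f x a)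
              ≤ ρ x * (β * ((∑ a, pstar x a ^ 2 / pref x a)
                  - (∑ a, p x a ^ 2 / pref x a) / 2)) := h
            _ = β * (ρ x * ∑ a, pstar x a ^ 2 / pref x a)
                - β / 2 * (ρ x * ∑ a, p x a ^ 2 / pref x a) := by ring
      _ = β * Cone ρ pref pstar - β / 2 * Cone ρ pref p := by
          rw [Finset.sum_sub_distrib, ← Finset.mul_sum, ← Finset.mul_sum, Cone, Cone]
  -- pair decomposition per context
  have hxid : ∀ x, (∑ a, p x a * (f x a - rstar x a))
      - (∑ a, pstar x a * (f x a - rstar x a))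
      = (∑ a, ∑ b, p x a * pref x b * ((f x a - rstar x a) - (f x b - rstar x b)))
        + (∑ a, ∑ b, pstar x a * pref x b * ((f x b - rstar x b) - (f x a - rstar x a))) := by
    intro x
    have c1 : ∑ a, ∑ b, p x a * pref x b * ((f x a - rstar x a) - (f x b - rstar x b))
        = (∑ a, p x a * (f x a - rstar x a)) - ∑ b, pref x b * (f x b - rstar x b) := by
      have hinner : ∀ a, ∑ b, p x a * pref x b * ((f x a - rstar x a) - (f x b - rstar x b))
          = p x a * (f x a - rstar x a)
            - p x a * ∑ b, pref x b * (f x b - rstar x b) := by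
        intro a
        calc ∑ b, p x a * pref x b * ((f x a - rstar x a) - (f x b - rstar x b))
            = ∑ b, ((p x a * (f x a - rstar x a)) * pref x b
                - p x a * (pref x b * (f x b - rstar x b))) :=
              Finset.sum_congr rfl fun b _ => by ring
          _ = (p x a * (f x a - rstar x a)) * (∑ b, pref x b)
              - p x a * ∑ b, pref x b * (f x b - rstar x b) := by
              rw [Finset.sum_sub_distrib, ← Finset.mul_sum, ← Finset.mul_sum]
          _ = _ := by rw [hprefsum x, mul_one]
      rw [Finset.sum_congr rfl fun a _ => hinner a, Finset.sum_sub_distrib,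
        ← Finset.sum_mul, hpsum x, one_mul]
    have c2 : ∑ a, ∑ b, pstar x a * pref x b * ((f x b - rstar x b) - (f x a - rstar x a))
        = (∑ b, pref x b * (f x b - rstar x b)) - ∑ a, pstar x a * (f x a - rstar x a) := by
      have hinner : ∀ a, ∑ b, pstar x a * pref x b * ((f x b - rstar x b) - (f x a - rstar x a))
          = pstar x a * (∑ b, pref x b * (f x b - rstar x b))
            - (pstar x a * (f x a - rstar x a)) := by
        intro a
        calc ∑ b, pstar x a * pref x b * ((f x b - rstar x b) - (f x a - rstar x a))
            = ∑ b, (pstar x a * (pref x b * (f x b - rstar x b))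
                - (pstar x a * (f x a - rstar x a)) * pref x b) :=
              Finset.sum_congr rfl fun b _ => by ring
          _ = pstar x a * (∑ b, pref x b * (f x b - rstar x b))
              - (pstar x a * (f x a - rstar x a)) * (∑ b, pref x b) := by
              rw [Finset.sum_sub_distrib, ← Finset.mul_sum, ← Finset.mul_sum]
          _ = _ := by rw [hprefsum x, mul_one]
      rw [Finset.sum_congr rfl fun a _ => hinner a, Finset.sum_sub_distrib,
        ← Finset.sum_mul, hpstarsum x, one_mul]
    rw [c1, c2]; ring
  -- statistical part
  have hz : ∀ pol : X → A → ℝ,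
      ∑ x, ρ x * (∑ a, ∑ b, pol x a * pref x b * (κ * t (x, a, b)))
        = κ * ∑ z : X × A × A, ν z * (pol z.1 z.2.1 / pref z.1 z.2.1) * t z := by
    intro pol
    rw [Fintype.sum_prod_type, Finset.mul_sum]
    apply Finset.sum_congr rfl; intro x _
    calc ρ x * (∑ a, ∑ b, pol x a * pref x b * (κ * t (x, a, b)))
        = ∑ a, ∑ b, ρ x * (pol x a * pref x b * (κ * t (x, a, b))) := by
          rw [Finset.mul_sum]
          exact Finset.sum_congr rfl fun a _ => by rw [Finset.mul_sum]
      _ = ∑ a, ∑ b, κ * (ν (x, a, b) * (pol x a / pref x a) * t (x, a, b)) := by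
          apply Finset.sum_congr rfl; intro a _
          apply Finset.sum_congr rfl; intro b _
          simp only [hνdef]
          have e : pref x a * (pol x a / pref x a) = pol x a := by
            rw [mul_comm]
            exact div_mul_cancel₀ _ (hpref x a).ne'
          rw [show ρ x * pref x a * pref x b * (pol x a / pref x a) * t (x, a, b)
            = ρ x * (pref x a * (pol x a / pref x a)) * pref x b * t (x, a, b) from by ring, e]
          ring
      _ = κ * ∑ y : A × A, ν (x, y) * (pol x y.1 / pref x y.1) * t (x, y) := by
          rw [Fintype.sum_prod_type, Finset.mul_sum]
          exact Finset.sum_congr rfl fun a _ => by rw [Finset.mul_sum]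
  have hE1 : ∑ x, ρ x * ((∑ a, p x a * (f x a - rstar x a))
      - ∑ a, pstar x a * (f x a - rstar x a))
      ≤ κ * Real.sqrt (Cone ρ pref p * ε2) + κ * Real.sqrt (Cone ρ pref pstar * ε2) := by
    have hb : ∀ x, ρ x * ((∑ a, p x a * (f x a - rstar x a))
        - ∑ a, pstar x a * (f x a - rstar x a))
        ≤ ρ x * ((∑ a, ∑ b, p x a * pref x b * (κ * t (x, a, b)))
            + ∑ a, ∑ b, pstar x a * pref x b * (κ * t (x, a, b))) := by
      intro x
      apply mul_le_mul_of_nonneg_left _ (hρ x)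
      rw [hxid x]
      apply add_le_add
      · apply Finset.sum_le_sum; intro a _
        apply Finset.sum_le_sum; intro b _
        apply mul_le_mul_of_nonneg_left _ (mul_nonneg (hp x a).le (hpref x b).le)
        exact le_trans (le_abs_self _) (hkey x a b)
      · apply Finset.sum_le_sum; intro a _
        apply Finset.sum_le_sum; intro b _
        apply mul_le_mul_of_nonneg_left _ (mul_nonneg (hpstar x a) (hpref x b).le)
        refine le_trans (le_abs_self _) ?_
        rw [abs_sub_comm]
        exact hkey x a b
    calc ∑ x, ρ x * ((∑ a, p x a * (f x a - rstar x a))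
          - ∑ a, pstar x a * (f x a - rstar x a))
        ≤ ∑ x, ρ x * ((∑ a, ∑ b, p x a * pref x b * (κ * t (x, a, b)))
            + ∑ a, ∑ b, pstar x a * pref x b * (κ * t (x, a, b))) :=
          Finset.sum_le_sum fun x _ => hb x
      _ = (∑ x, ρ x * (∑ a, ∑ b, p x a * pref x b * (κ * t (x, a, b))))
          + ∑ x, ρ x * (∑ a, ∑ b, pstar x a * pref x b * (κ * t (x, a, b))) := by
          rw [← Finset.sum_add_distrib]
          exact Finset.sum_congr rfl fun x _ => by ring
      _ = κ * (∑ z : X × A × A, ν z * (p z.1 z.2.1 / pref z.1 z.2.1) * t z)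
          + κ * (∑ z : X × A × A, ν z * (pstar z.1 z.2.1 / pref z.1 z.2.1) * t z) := by
          rw [hz p, hz pstar]
      _ ≤ κ * Real.sqrt (Cone ρ pref p * ε2) + κ * Real.sqrt (Cone ρ pref pstar * ε2) :=
          add_le_add (mul_le_mul_of_nonneg_left (hCS p) hκ)
            (mul_le_mul_of_nonneg_left (hCS pstar) hκ)
  -- AM-GM on the p-side statistical term
  have hAM : κ * Real.sqrt (Cone ρ pref p * ε2)
      ≤ β / 2 * Cone ρ pref p + 32 * Vmax ^ 2 * Real.exp (2 * Rmax) ^ 2 * ε2 / β := by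
    have h1 : κ * Real.sqrt (Cone ρ pref p * ε2)
        = Real.sqrt ((β * Cone ρ pref p) * (κ ^ 2 * ε2 / β)) := by
      rw [show (β * Cone ρ pref p) * (κ ^ 2 * ε2 / β) = κ ^ 2 * (Cone ρ pref p * ε2) from by
        field_simp, Real.sqrt_mul (sq_nonneg κ), Real.sqrt_sq hκ]
    have h2 := amgm_sqrt (mul_nonneg hβ.le (hConeNN p))
      (by positivity : (0:ℝ) ≤ κ ^ 2 * ε2 / β)
    have h3 : κ ^ 2 * ε2 / β / 2 = 32 * Vmax ^ 2 * Real.exp (2 * Rmax) ^ 2 * ε2 / β := by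
      rw [hκdef]; ring
    rw [h1]
    calc Real.sqrt ((β * Cone ρ pref p) * (κ ^ 2 * ε2 / β))
        ≤ β * Cone ρ pref p / 2 + κ ^ 2 * ε2 / β / 2 := h2
      _ = β / 2 * Cone ρ pref p + 32 * Vmax ^ 2 * Real.exp (2 * Rmax) ^ 2 * ε2 / β := by
          rw [h3]; ring
  rw [hJ]
  linarith [hE1, hE2, hAM]

lemma Cone_ge_one' {X A : Type*} [Fintype X] [Fintype A]
    (ρ : X → ℝ) (hρ : ∀ x, 0 ≤ ρ x) (hρsum : ∑ x, ρ x = 1)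
    (pref : X → A → ℝ) (hpref : ∀ x a, 0 < pref x a) (hprefsum : ∀ x, ∑ a, pref x a = 1)
    (pol : X → A → ℝ) (hpol : ∀ x a, 0 ≤ pol x a) (hpolsum : ∀ x, ∑ a, pol x a = 1) :
    1 ≤ ∑ x, ρ x * ∑ a, (pol x a) ^ 2 / pref x a := by
  have hx : ∀ x, 1 ≤ ∑ a, (pol x a) ^ 2 / pref x a := by
    intro x
    have key := Finset.sum_mul_sq_le_sq_mul_sq Finset.univ
      (fun a => Real.sqrt (pref x a)) (fun a => pol x a / Real.sqrt (pref x a))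
    have h1 : ∀ a, Real.sqrt (pref x a) * (pol x a / Real.sqrt (pref x a)) = pol x a := by
      intro a
      rw [mul_div_assoc']; rw [mul_comm, mul_div_assoc]
      rw [div_self (Real.sqrt_ne_zero'.2 (hpref x a)), mul_one]
    have h2 : ∀ a, (Real.sqrt (pref x a)) ^ 2 = pref x a := fun a => Real.sq_sqrt (hpref x a).le
    have h3 : ∀ a, (pol x a / Real.sqrt (pref x a)) ^ 2 = pol x a ^ 2 / pref x a := by
      intro a; rw [div_pow, Real.sq_sqrt (hpref x a).le]
    rw [Finset.sum_congr rfl (fun a _ => h1 a), Finset.sum_congr rfl (fun a _ => h2 a),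
      Finset.sum_congr rfl (fun a _ => h3 a), hpolsum x, hprefsum x] at key
    simpa using key
  calc (1:ℝ) = ∑ x, ρ x * 1 := by simp [hρsum]
    _ ≤ ∑ x, ρ x * ∑ a, (pol x a) ^ 2 / pref x a := by
        apply Finset.sum_le_sum; intro x _
        exact mul_le_mul_of_nonneg_left (hx x) (hρ x)

noncomputable def impR {X A : Type*} (pref : X → A → ℝ) (β Rmax : ℝ)
    (p : X → A → ℝ) (z : X × A × A) : ℝ :=
  clip (2 * Rmax) (β * phi (p z.1 z.2.1 / pref z.1 z.2.1)
    - β * phi (p z.1 z.2.2 / pref z.1 z.2.2))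

noncomputable def BTmodel {X A : Type*} (ρ : X → ℝ) (pref : X → A → ℝ) (β Rmax : ℝ)
    (p : X → A → ℝ) (z : X × A × A) : ℝ :=
  2 * ρ z.1 * pref z.1 z.2.1 * pref z.1 z.2.2 * sigmoid (impR pref β Rmax p z)

lemma Cone_nonneg {X A : Type*} [Fintype X] [Fintype A]
    (ρ : X → ℝ) (hρ : ∀ x, 0 ≤ ρ x)
    (pref : X → A → ℝ) (hpref : ∀ x a, 0 < pref x a) (pol : X → A → ℝ) :
    0 ≤ Cone ρ pref pol := by
  rw [Cone]
  exact Finset.sum_nonneg fun x _ => mul_nonneg (hρ x)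
    (Finset.sum_nonneg fun a _ => div_nonneg (sq_nonneg _) (hpref x a).le)

set_option maxHeartbeats 2000000 in
/-- Sample complexity bound for χPO (Theorem 3.1): under realizability and bounded implicit
rewards, with probability at least `1 - δ` over the draw of `n` Bradley–Terry samples, every
maximizer of the χPO objective over the policy class enjoys, simultaneously for all comparator
policies `π*`, a regret bound scaling with the single-policy concentrability `C^{π*}`; moreover
a tuned choice of `β` yields the fast single-policy rate. -/
theorem chiPO_sample_complexity
    {X A : Type*} [Fintype X] [Fintype A] [Nonempty X] [Nonempty A]
    (ρ : X → ℝ) (hρ : ∀ x, 0 < ρ x) (hρsum : ∑ x, ρ x = 1)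
    (pref : X → A → ℝ) (hpref : ∀ x a, 0 < pref x a)
    (hprefsum : ∀ x, ∑ a, pref x a = 1)
    (Rmax : ℝ) (hRmax : 1 ≤ Rmax)
    (rstar : X → A → ℝ) (hrstar : ∀ x a, rstar x a ∈ Set.Icc (0 : ℝ) Rmax)
    (β : ℝ) (hβ : 0 < β)
    (Pol : Finset (X → A → ℝ)) (hPolne : Pol.Nonempty)
    (hPolvalid : ∀ p ∈ Pol, (∀ x a, 0 < p x a) ∧ ∀ x, ∑ a, p x a = 1)
    (pβ : X → A → ℝ) (hpβmem : pβ ∈ Pol) (Z : X → ℝ)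
    (hreal : ∀ x a, rstar x a = β * phi (pβ x a / pref x a) + Z x)
    (Vmax : ℝ) (hV : Rmax ≤ Vmax)
    (hVmax : ∀ p ∈ Pol, ∀ x a b,
      |β * phi (p x a / pref x a) - β * phi (p x b / pref x b)| ≤ Vmax)
    (n : ℕ) (hn : 0 < n)
    (δ : ℝ) (hδ : δ ∈ Set.Ioo (0 : ℝ) 1) :
    (1 - δ ≤ ∑ D : Fin n → X × A × A,
      if (∀ phat ∈ Pol,
            (∀ p ∈ Pol, chiPOobj pref β Rmax p D ≤ chiPOobj pref β Rmax phat D) →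
            ∀ pstar : X → A → ℝ, (∀ x a, 0 ≤ pstar x a) → (∀ x, ∑ a, pstar x a = 1) →
              Jval ρ rstar pstar - Jval ρ rstar phat ≤
                32 * Vmax * Real.exp (2 * Rmax) *
                  Real.sqrt (2 * Cone ρ pref pstar *
                    Real.log ((Pol.card : ℝ) / δ) / (n : ℝ))
                + β * Cone ρ pref pstar
                + 256 * Vmax ^ 2 * Real.exp (4 * Rmax) *
                    Real.log ((Pol.card : ℝ) / δ) / (β * (n : ℝ)))
      then ∏ i, BTweight ρ pref rstar (D i) else 0)
    ∧
    (∀ pstar : X → A → ℝ, (∀ x a, 0 ≤ pstar x a) → (∀ x, ∑ a, pstar x a = 1) →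
      β = 32 * Vmax * Real.exp (2 * Rmax) *
          Real.sqrt (2 * Real.log ((Pol.card : ℝ) / δ) / ((n : ℝ) * Cone ρ pref pstar)) →
      1 - δ ≤ ∑ D : Fin n → X × A × A,
        if (∀ phat ∈ Pol,
              (∀ p ∈ Pol, chiPOobj pref β Rmax p D ≤ chiPOobj pref β Rmax phat D) →
              Jval ρ rstar pstar - Jval ρ rstar phat ≤
                68 * Vmax * Real.exp (2 * Rmax) *
                  Real.sqrt (Cone ρ pref pstar *
                    Real.log ((Pol.card : ℝ) / δ) / (n : ℝ)))
        then ∏ i, BTweight ρ pref rstar (D i) else 0) := by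
  classical
  obtain ⟨hδ0, hδ1⟩ := hδ
  have hn' : (0:ℝ) < (n:ℝ) := by exact_mod_cast hn
  have hcard : 0 < Pol.card := Finset.card_pos.2 hPolne
  have hcardR : (0:ℝ) < (Pol.card : ℝ) := by exact_mod_cast hcard
  have hVpos : (0:ℝ) < Vmax := by linarith
  have hEpos := Real.exp_pos (2 * Rmax)
  have hE4pos := Real.exp_pos (4 * Rmax)
  have h2R : (0:ℝ) ≤ 2 * Rmax := by linarith
  have hρ' : ∀ x, 0 ≤ ρ x := fun x => (hρ x).le
  set L := Real.log ((Pol.card : ℝ) / δ) with hLdef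
  have hL : 0 < L := by
    apply Real.log_pos
    rw [lt_div_iff₀ hδ0, one_mul]
    calc δ < 1 := hδ1
      _ ≤ (Pol.card : ℝ) := by exact_mod_cast hcard
  -- positivity of the densities
  have hw1pos : ∀ z : X × A × A, 0 < BTweight ρ pref rstar z := by
    intro z
    have h2ρ : 0 < 2 * ρ z.1 := by linarith [hρ z.1]
    exact mul_pos (mul_pos (mul_pos h2ρ (hpref _ _)) (hpref _ _)) (sigmoid_pos _)
  have hmdlpos : ∀ p (z : X × A × A), 0 < BTmodel ρ pref β Rmax p z := by
    intro p z
    have h2ρ : 0 < 2 * ρ z.1 := by linarith [hρ z.1]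
    exact mul_pos (mul_pos (mul_pos h2ρ (hpref _ _)) (hpref _ _)) (sigmoid_pos _)
  -- normalization
  have hw1sum : ∑ z : X × A × A, BTweight ρ pref rstar z = 1 := by
    have h := BTmod_sum_one ρ hρsum pref hprefsum
      (fun z => rstar z.1 z.2.1 - rstar z.1 z.2.2) (fun x a b => by ring)
    calc ∑ z : X × A × A, BTweight ρ pref rstar z
        = ∑ z : X × A × A, 2 * ρ z.1 * pref z.1 z.2.1 * pref z.1 z.2.2 *
            sigmoid (rstar z.1 z.2.1 - rstar z.1 z.2.2) :=
          Finset.sum_congr rfl fun z _ => rfl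
      _ = 1 := h
  have hFanti : ∀ p (x : X) (a b : A), impR pref β Rmax p (x, b, a) = - impR pref β Rmax p (x, a, b) := by
    intro p x a b
    show clip (2 * Rmax) (β * phi (p x b / pref x b) - β * phi (p x a / pref x a))
      = - clip (2 * Rmax) (β * phi (p x a / pref x a) - β * phi (p x b / pref x b))
    rw [show β * phi (p x b / pref x b) - β * phi (p x a / pref x a)
      = -(β * phi (p x a / pref x a) - β * phi (p x b / pref x b)) from by ring, clip_neg h2R]
  have hmdlsum : ∀ p, ∑ z : X × A × A, BTmodel ρ pref β Rmax p z = 1 := by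
    intro p
    have h := BTmod_sum_one ρ hρsum pref hprefsum (impR pref β Rmax p) (hFanti p)
    calc ∑ z : X × A × A, BTmodel ρ pref β Rmax p z
        = ∑ z : X × A × A, 2 * ρ z.1 * pref z.1 z.2.1 * pref z.1 z.2.2 *
            sigmoid (impR pref β Rmax p z) := Finset.sum_congr rfl fun z _ => rfl
      _ = 1 := h
  -- realizability: the implicit reward of pβ is the true reward difference
  have hFpβ : ∀ z : X × A × A, impR pref β Rmax pβ z = rstar z.1 z.2.1 - rstar z.1 z.2.2 := by
    intro z
    obtain ⟨x, a, b⟩ := z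
    have h1 := hrstar x a; have h2 := hrstar x b
    rw [Set.mem_Icc] at h1 h2
    have hd : β * phi (pβ x a / pref x a) - β * phi (pβ x b / pref x b)
        = rstar x a - rstar x b := by
      rw [hreal x a, hreal x b]; ring
    show clip (2 * Rmax) (β * phi (pβ x a / pref x a) - β * phi (pβ x b / pref x b))
      = rstar x a - rstar x b
    rw [hd]
    exact clip_of_mem (by linarith [h1.1, h1.2, h2.1, h2.2]) (by linarith [h1.1, h1.2, h2.1, h2.2])
  have hobj : ∀ p (D : Fin n → X × A × A),
      chiPOobj pref β Rmax p D = ∑ i, Real.log (sigmoid (impR pref β Rmax p (D i))) :=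
    fun p D => rfl
  -- likelihood ratio test
  have hLR : ∀ p (D : Fin n → X × A × A),
      chiPOobj pref β Rmax pβ D ≤ chiPOobj pref β Rmax p D →
      ∏ i, BTweight ρ pref rstar (D i) ≤ ∏ i, BTmodel ρ pref β Rmax p (D i) := by
    intro p D h
    rw [hobj pβ D, hobj p D] at h
    have h2 := Real.exp_le_exp.mpr h
    rw [Real.exp_sum, Real.exp_sum] at h2
    rw [Finset.prod_congr rfl (fun i _ => Real.exp_log (sigmoid_pos (impR pref β Rmax pβ (D i)))),
      Finset.prod_congr rfl (fun i _ => Real.exp_log (sigmoid_pos (impR pref β Rmax p (D i))))] at h2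
    have hbase : (0:ℝ) ≤ ∏ i, 2 * ρ (D i).1 * pref (D i).1 (D i).2.1 * pref (D i).1 (D i).2.2 :=
      Finset.prod_nonneg fun i _ => by
        have := hρ' (D i).1
        have := (hpref (D i).1 (D i).2.1).le
        have := (hpref (D i).1 (D i).2.2).le
        positivity
    calc ∏ i, BTweight ρ pref rstar (D i)
        = (∏ i, 2 * ρ (D i).1 * pref (D i).1 (D i).2.1 * pref (D i).1 (D i).2.2) *
            ∏ i, sigmoid (impR pref β Rmax pβ (D i)) := by
          rw [← Finset.prod_mul_distrib]
          apply Finset.prod_congr rfl; intro i _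
          rw [BTweight, hFpβ (D i)]
      _ ≤ (∏ i, 2 * ρ (D i).1 * pref (D i).1 (D i).2.1 * pref (D i).1 (D i).2.2) *
            ∏ i, sigmoid (impR pref β Rmax p (D i)) :=
          mul_le_mul_of_nonneg_left h2 hbase
      _ = ∏ i, BTmodel ρ pref β Rmax p (D i) := by
          rw [← Finset.prod_mul_distrib]
          exact Finset.prod_congr rfl fun i _ => rfl
  -- Hellinger affinity
  set cH : (X → A → ℝ) → ℝ := fun p =>
    ∑ z : X × A × A, Real.sqrt (BTweight ρ pref rstar z * BTmodel ρ pref β Rmax p z)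
    with hcHdef
  have hcH0 : ∀ p, 0 ≤ cH p := fun p => Finset.sum_nonneg fun z _ => Real.sqrt_nonneg _
  -- tail bound for a single policy
  have htail : ∀ p ∈ Pol, L / (n:ℝ) < 1 - cH p →
      ∑ D : Fin n → X × A × A, (if chiPOobj pref β Rmax pβ D ≤ chiPOobj pref β Rmax p D
        then ∏ i, BTweight ρ pref rstar (D i) else 0) ≤ δ / (Pol.card : ℝ) := by
    intro p hpmem hgap
    have hche := chernoff_bound n (fun z => BTweight ρ pref rstar z)
      (fun z => BTmodel ρ pref β Rmax p z) hw1pos (hmdlpos p)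
      (fun D => chiPOobj pref β Rmax pβ D ≤ chiPOobj pref β Rmax p D)
      (fun D h => hLR p D h)
    have s1 : (cH p) ^ n ≤ (Real.exp (cH p - 1)) ^ n := by
      apply pow_le_pow_left₀ (hcH0 p)
      linarith [Real.add_one_le_exp (cH p - 1)]
    have s2 : (Real.exp (cH p - 1)) ^ n = Real.exp ((n:ℝ) * (cH p - 1)) :=
      (Real.exp_nat_mul _ n).symm
    have s3 : Real.exp ((n:ℝ) * (cH p - 1)) ≤ Real.exp (-L) := by
      apply Real.exp_le_exp.mpr
      have := (div_lt_iff₀ hn').mp hgap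
      nlinarith
    have s4 : Real.exp (-L) = δ / (Pol.card : ℝ) := by
      rw [hLdef, Real.exp_neg, Real.exp_log (div_pos hcardR hδ0), inv_div]
    calc ∑ D : Fin n → X × A × A, (if chiPOobj pref β Rmax pβ D ≤ chiPOobj pref β Rmax p D
          then ∏ i, BTweight ρ pref rstar (D i) else 0)
        ≤ (cH p) ^ n := hche
      _ ≤ (Real.exp (cH p - 1)) ^ n := s1
      _ = Real.exp ((n:ℝ) * (cH p - 1)) := s2
      _ ≤ Real.exp (-L) := s3
      _ = δ / (Pol.card : ℝ) := s4
  -- the good event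
  set G : (Fin n → X × A × A) → Prop := fun D => ∀ p ∈ Pol, L / (n:ℝ) < 1 - cH p →
    ¬ (chiPOobj pref β Rmax pβ D ≤ chiPOobj pref β Rmax p D) with hGdef
  have hwnn : ∀ D : Fin n → X × A × A, 0 ≤ ∏ i, BTweight ρ pref rstar (D i) :=
    fun D => Finset.prod_nonneg fun i _ => (hw1pos _).le
  have hGprob : 1 - δ ≤ ∑ D : Fin n → X × A × A,
      (if G D then ∏ i, BTweight ρ pref rstar (D i) else 0) := by
    have htot : ∑ D : Fin n → X × A × A, ∏ i, BTweight ρ pref rstar (D i) = 1 := by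
      rw [sum_prod_dataset n (BTweight ρ pref rstar), hw1sum, one_pow]
    have hsplit : (∑ D : Fin n → X × A × A, (if G D then ∏ i, BTweight ρ pref rstar (D i) else 0))
        + ∑ D : Fin n → X × A × A, (if ¬ G D then ∏ i, BTweight ρ pref rstar (D i) else 0) = 1 := by
      have e : (∑ D : Fin n → X × A × A, (if G D then ∏ i, BTweight ρ pref rstar (D i) else 0))
          + (∑ D : Fin n → X × A × A, (if ¬ G D then ∏ i, BTweight ρ pref rstar (D i) else 0))
          = ∑ D : Fin n → X × A × A, ∏ i, BTweight ρ pref rstar (D i) := by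
        rw [← Finset.sum_add_distrib]
        apply Finset.sum_congr rfl; intro D _
        by_cases h : G D
        · rw [if_pos h, if_neg (not_not_intro h), add_zero]
        · rw [if_neg h, if_pos h, zero_add]
      rw [e, htot]
    have hbadsum : ∑ D : Fin n → X × A × A,
        (if ¬ G D then ∏ i, BTweight ρ pref rstar (D i) else 0) ≤ δ := by
      have hterm_nn : ∀ (D : Fin n → X × A × A) (p : X → A → ℝ),
          0 ≤ (if (L / (n:ℝ) < 1 - cH p ∧ chiPOobj pref β Rmax pβ D ≤ chiPOobj pref β Rmax p D)
            then ∏ i, BTweight ρ pref rstar (D i) else 0) := by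
        intro D p
        split_ifs
        · exact hwnn D
        · exact le_refl 0
      have hpoint : ∀ D : Fin n → X × A × A,
          (if ¬ G D then ∏ i, BTweight ρ pref rstar (D i) else 0)
          ≤ ∑ p ∈ Pol, (if (L / (n:ℝ) < 1 - cH p ∧
              chiPOobj pref β Rmax pβ D ≤ chiPOobj pref β Rmax p D)
            then ∏ i, BTweight ρ pref rstar (D i) else 0) := by
        intro D
        by_cases h : G D
        · rw [if_neg (not_not_intro h)]
          exact Finset.sum_nonneg fun p _ => hterm_nn D p
        · rw [if_pos h]
          simp only [hGdef] at h
          push_neg at h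
          obtain ⟨p₀, hp₀mem, hgap, hle⟩ := h
          have hsingle := Finset.single_le_sum (fun p _ => hterm_nn D p) hp₀mem
          rwa [if_pos ⟨hgap, hle⟩] at hsingle
      calc ∑ D : Fin n → X × A × A, (if ¬ G D then ∏ i, BTweight ρ pref rstar (D i) else 0)
          ≤ ∑ D : Fin n → X × A × A, ∑ p ∈ Pol,
              (if (L / (n:ℝ) < 1 - cH p ∧
                chiPOobj pref β Rmax pβ D ≤ chiPOobj pref β Rmax p D)
              then ∏ i, BTweight ρ pref rstar (D i) else 0) :=
            Finset.sum_le_sum fun D _ => hpoint D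
        _ = ∑ p ∈ Pol, ∑ D : Fin n → X × A × A,
              (if (L / (n:ℝ) < 1 - cH p ∧
                chiPOobj pref β Rmax pβ D ≤ chiPOobj pref β Rmax p D)
              then ∏ i, BTweight ρ pref rstar (D i) else 0) := Finset.sum_comm
        _ ≤ ∑ p ∈ Pol, δ / (Pol.card : ℝ) := by
            apply Finset.sum_le_sum; intro p hp
            by_cases hgap : L / (n:ℝ) < 1 - cH p
            · calc ∑ D : Fin n → X × A × A, (if (L / (n:ℝ) < 1 - cH p ∧
                    chiPOobj pref β Rmax pβ D ≤ chiPOobj pref β Rmax p D)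
                  then ∏ i, BTweight ρ pref rstar (D i) else 0)
                  = ∑ D : Fin n → X × A × A,
                    (if chiPOobj pref β Rmax pβ D ≤ chiPOobj pref β Rmax p D
                    then ∏ i, BTweight ρ pref rstar (D i) else 0) :=
                  Finset.sum_congr rfl fun D _ => by rw [if_congr (and_iff_right hgap) rfl rfl]
                _ ≤ δ / (Pol.card : ℝ) := htail p hp hgap
            · have hzero : ∀ D : Fin n → X × A × A, (if (L / (n:ℝ) < 1 - cH p ∧
                  chiPOobj pref β Rmax pβ D ≤ chiPOobj pref β Rmax p D)
                  then ∏ i, BTweight ρ pref rstar (D i) else 0) = 0 :=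
                fun D => if_neg (fun hc => hgap hc.1)
              rw [Finset.sum_congr rfl fun D _ => hzero D, Finset.sum_const, smul_zero]
              exact div_nonneg hδ0.le hcardR.le
        _ = δ := by
            rw [Finset.sum_const, nsmul_eq_mul, mul_comm, div_mul_cancel₀ _ hcardR.ne']
    linarith
  -- statistical error control on the good event
  have hstatbound : ∀ phat, 1 - cH phat ≤ L / (n:ℝ) →
      ∑ z : X × A × A, (ρ z.1 * pref z.1 z.2.1 * pref z.1 z.2.2) *
        (sigmoid (clip (2 * Rmax) (β * phi (phat z.1 z.2.1 / pref z.1 z.2.1)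
            - β * phi (phat z.1 z.2.2 / pref z.1 z.2.2)))
          - sigmoid (rstar z.1 z.2.1 - rstar z.1 z.2.2)) ^ 2 ≤ 4 * (L / (n:ℝ)) := by
    intro phat hsmall
    have hb1 : ∑ z : X × A × A, 2 * (ρ z.1 * pref z.1 z.2.1 * pref z.1 z.2.2) *
        sigmoid (rstar z.1 z.2.1 - rstar z.1 z.2.2) = 1 := by
      rw [← hw1sum]
      exact Finset.sum_congr rfl fun z _ => by rw [BTweight]; ring
    have hb2 : ∑ z : X × A × A, 2 * (ρ z.1 * pref z.1 z.2.1 * pref z.1 z.2.2) *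
        sigmoid (impR pref β Rmax phat z) = 1 := by
      rw [← hmdlsum phat]
      exact Finset.sum_congr rfl fun z _ => by rw [BTmodel]; ring
    have hh := hellinger_sq (fun z : X × A × A => ρ z.1 * pref z.1 z.2.1 * pref z.1 z.2.2)
      (fun z => sigmoid (rstar z.1 z.2.1 - rstar z.1 z.2.2))
      (fun z => sigmoid (impR pref β Rmax phat z))
      (fun z => mul_nonneg (mul_nonneg (hρ' z.1) (hpref _ _).le) (hpref _ _).le)
      (fun z => (sigmoid_pos _).le) (fun z => sigmoid_le_one _)
      (fun z => (sigmoid_pos _).le) (fun z => sigmoid_le_one _)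
      hb1 hb2
    have hcHeq : ∑ z : X × A × A,
        Real.sqrt ((2 * (ρ z.1 * pref z.1 z.2.1 * pref z.1 z.2.2) *
            sigmoid (rstar z.1 z.2.1 - rstar z.1 z.2.2)) *
          (2 * (ρ z.1 * pref z.1 z.2.1 * pref z.1 z.2.2) *
            sigmoid (impR pref β Rmax phat z))) = cH phat := by
      apply Finset.sum_congr rfl; intro z _
      congr 1
      rw [BTweight, BTmodel]
      ring
    rw [hcHeq] at hh
    calc ∑ z : X × A × A, (ρ z.1 * pref z.1 z.2.1 * pref z.1 z.2.2) *
          (sigmoid (clip (2 * Rmax) (β * phi (phat z.1 z.2.1 / pref z.1 z.2.1)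
              - β * phi (phat z.1 z.2.2 / pref z.1 z.2.2)))
            - sigmoid (rstar z.1 z.2.1 - rstar z.1 z.2.2)) ^ 2
        = ∑ z : X × A × A, (ρ z.1 * pref z.1 z.2.1 * pref z.1 z.2.2) *
          (sigmoid (rstar z.1 z.2.1 - rstar z.1 z.2.2)
            - sigmoid (impR pref β Rmax phat z)) ^ 2 :=
          Finset.sum_congr rfl fun z _ => by rw [impR]; ring
      _ ≤ 4 * (1 - cH phat) := hh
      _ ≤ 4 * (L / (n:ℝ)) := by linarith
  -- deterministic regret bound on the good event
  have hdet0 : ∀ D : Fin n → X × A × A, G D → ∀ phat ∈ Pol,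
      (∀ p ∈ Pol, chiPOobj pref β Rmax p D ≤ chiPOobj pref β Rmax phat D) →
      ∀ pstar : X → A → ℝ, (∀ x a, 0 ≤ pstar x a) → (∀ x, ∑ a, pstar x a = 1) →
      Jval ρ rstar pstar - Jval ρ rstar phat ≤
        8 * Vmax * Real.exp (2 * Rmax) * Real.sqrt (Cone ρ pref pstar * (4 * (L / (n:ℝ))))
        + β * Cone ρ pref pstar
        + 32 * Vmax ^ 2 * Real.exp (2 * Rmax) ^ 2 * (4 * (L / (n:ℝ))) / β := by
    intro D hG phat hmem hmax pstar hps1 hps2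
    have hsmall : 1 - cH phat ≤ L / (n:ℝ) := by
      by_contra hcon
      push_neg at hcon
      exact (hG phat hmem hcon) (hmax pβ hpβmem)
    obtain ⟨hppos, hpsum⟩ := hPolvalid phat hmem
    exact det_core ρ hρ' pref hpref hprefsum Rmax hRmax rstar hrstar β hβ Vmax hV
      (fun x a => β * phi (phat x a / pref x a)) (hVmax phat hmem)
      phat hppos hpsum pstar hps1 hps2
      (fun x => phi_part (pref x) (phat x) (pstar x) (hpref x) (hprefsum x)
        (hppos x) (hpsum x) (hps1 x) (hps2 x) β hβ)
      (4 * (L / (n:ℝ))) (by positivity)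
      (hstatbound phat hsmall)
  -- numeric facts
  have hE24 : Real.exp (2 * Rmax) ^ 2 = Real.exp (4 * Rmax) := by
    rw [sq, ← Real.exp_add]; ring_nf
  have hsqrt4 : Real.sqrt 4 = 2 := by
    rw [show (4:ℝ) = 2 ^ 2 from by norm_num, Real.sqrt_sq (by norm_num : (0:ℝ) ≤ 2)]
  constructor
  · -- part 1
    refine le_trans hGprob (Finset.sum_le_sum fun D _ => ?_)
    by_cases h : G D
    · rw [if_pos h]
      rw [if_pos ?_]
      intro phat hmem hmax pstar hps1 hps2
      have hbase := hdet0 D h phat hmem hmax pstar hps1 hps2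
      have hCnn : 0 ≤ Cone ρ pref pstar := Cone_nonneg ρ hρ' pref hpref pstar
      have hsarg : 0 ≤ Cone ρ pref pstar * L / (n:ℝ) :=
        div_nonneg (mul_nonneg hCnn hL.le) hn'.le
      have e4 : Real.sqrt (Cone ρ pref pstar * (4 * (L / (n:ℝ))))
          = 2 * Real.sqrt (Cone ρ pref pstar * L / (n:ℝ)) := by
        rw [show Cone ρ pref pstar * (4 * (L / (n:ℝ)))
          = 4 * (Cone ρ pref pstar * L / (n:ℝ)) from by ring,
          Real.sqrt_mul (by norm_num : (0:ℝ) ≤ 4), hsqrt4]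
      have e5 : Real.sqrt (Cone ρ pref pstar * L / (n:ℝ))
          ≤ Real.sqrt (2 * Cone ρ pref pstar * L / (n:ℝ)) := by
        apply Real.sqrt_le_sqrt
        have : 2 * Cone ρ pref pstar * L / (n:ℝ) = 2 * (Cone ρ pref pstar * L / (n:ℝ)) := by ring
        linarith
      have t1 : 8 * Vmax * Real.exp (2 * Rmax) *
          Real.sqrt (Cone ρ pref pstar * (4 * (L / (n:ℝ))))
          ≤ 32 * Vmax * Real.exp (2 * Rmax) *
            Real.sqrt (2 * Cone ρ pref pstar * L / (n:ℝ)) := by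
        rw [e4]
        have hVE : (0:ℝ) ≤ Vmax * Real.exp (2 * Rmax) := by positivity
        nlinarith [Real.sqrt_nonneg (Cone ρ pref pstar * L / (n:ℝ)),
          mul_le_mul_of_nonneg_left e5 hVE]
      have t2 : 32 * Vmax ^ 2 * Real.exp (2 * Rmax) ^ 2 * (4 * (L / (n:ℝ))) / β
          ≤ 256 * Vmax ^ 2 * Real.exp (4 * Rmax) * L / (β * (n:ℝ)) := by
        have heq : 32 * Vmax ^ 2 * Real.exp (2 * Rmax) ^ 2 * (4 * (L / (n:ℝ))) / β
            = 128 * (Vmax ^ 2 * Real.exp (4 * Rmax) * L / (β * (n:ℝ))) := by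
          rw [hE24]; field_simp; ring
        have heq2 : 256 * Vmax ^ 2 * Real.exp (4 * Rmax) * L / (β * (n:ℝ))
            = 256 * (Vmax ^ 2 * Real.exp (4 * Rmax) * L / (β * (n:ℝ))) := by ring
        have hnn : 0 ≤ Vmax ^ 2 * Real.exp (4 * Rmax) * L / (β * (n:ℝ)) :=
          div_nonneg (mul_nonneg (mul_nonneg (sq_nonneg _) hE4pos.le) hL.le) (by positivity)
        linarith
      linarith
    · rw [if_neg h]
      split_ifs
      · exact hwnn D
      · exact le_refl 0
  · -- part 2
    intro pstar hps1 hps2 hβeq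
    have hCs1 : 1 ≤ Cone ρ pref pstar := by
      rw [Cone]
      exact Cone_ge_one' ρ hρ' hρsum pref hpref hprefsum pstar hps1 hps2
    have hCs0 : (0:ℝ) < Cone ρ pref pstar := by linarith
    refine le_trans hGprob (Finset.sum_le_sum fun D _ => ?_)
    by_cases h : G D
    · rw [if_pos h]
      rw [if_pos ?_]
      intro phat hmem hmax
      have hbase := hdet0 D h phat hmem hmax pstar hps1 hps2
      set s := Real.sqrt (Cone ρ pref pstar * L / (n:ℝ)) with hsdef
      have hs0 : 0 ≤ s := Real.sqrt_nonneg _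
      have hsargnn : 0 ≤ Cone ρ pref pstar * L / (n:ℝ) :=
        div_nonneg (mul_nonneg hCs0.le hL.le) hn'.le
      have hssq : s ^ 2 = Cone ρ pref pstar * L / (n:ℝ) := Real.sq_sqrt hsargnn
      set S := Real.sqrt (2 * L / ((n:ℝ) * Cone ρ pref pstar)) with hSdef
      have hSargpos : 0 < 2 * L / ((n:ℝ) * Cone ρ pref pstar) :=
        div_pos (by linarith) (mul_pos hn' hCs0)
      have hSpos : 0 < S := Real.sqrt_pos.2 hSargpos
      have hSsq : S ^ 2 = 2 * L / ((n:ℝ) * Cone ρ pref pstar) := Real.sq_sqrt hSargpos.le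
      have hsqrt2nn : (0:ℝ) ≤ Real.sqrt 2 := Real.sqrt_nonneg 2
      have hsqrt2sq : Real.sqrt 2 ^ 2 = 2 := Real.sq_sqrt (by norm_num)
      have e4 : Real.sqrt (Cone ρ pref pstar * (4 * (L / (n:ℝ)))) = 2 * s := by
        rw [show Cone ρ pref pstar * (4 * (L / (n:ℝ)))
          = 4 * (Cone ρ pref pstar * L / (n:ℝ)) from by ring,
          Real.sqrt_mul (by norm_num : (0:ℝ) ≤ 4), hsqrt4, hsdef]
      have hT2 : S * Cone ρ pref pstar = Real.sqrt 2 * s := by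
        apply eq_of_sq_eq (mul_nonneg hSpos.le hCs0.le) (mul_nonneg hsqrt2nn hs0)
        rw [mul_pow, mul_pow, hSsq, hssq, hsqrt2sq]
        field_simp
      have hT3a : 32 * Vmax ^ 2 * Real.exp (2 * Rmax) ^ 2 * (4 * (L / (n:ℝ))) / β
          = 4 * Vmax * Real.exp (2 * Rmax) * (L / ((n:ℝ) * S)) := by
        rw [hβeq]
        field_simp
      have hT3b : L / ((n:ℝ) * S) = s * (Real.sqrt 2 / 2) := by
        apply eq_of_sq_eq (div_nonneg hL.le (mul_nonneg hn'.le hSpos.le))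
          (mul_nonneg hs0 (by positivity))
        rw [div_pow, mul_pow, hSsq, mul_pow, div_pow, hssq, hsqrt2sq]
        field_simp
      have hβCs : β * Cone ρ pref pstar
          = 32 * Vmax * Real.exp (2 * Rmax) * (Real.sqrt 2 * s) := by
        rw [hβeq, mul_assoc, hT2]
      have hsqrt2le : Real.sqrt 2 ≤ 1.5 := by
        nlinarith [hsqrt2sq, hsqrt2nn]
      have hVE : (0:ℝ) ≤ Vmax * Real.exp (2 * Rmax) * s := by positivity
      calc Jval ρ rstar pstar - Jval ρ rstar phat
          ≤ 8 * Vmax * Real.exp (2 * Rmax) *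
              Real.sqrt (Cone ρ pref pstar * (4 * (L / (n:ℝ))))
            + β * Cone ρ pref pstar
            + 32 * Vmax ^ 2 * Real.exp (2 * Rmax) ^ 2 * (4 * (L / (n:ℝ))) / β := hbase
        _ = 16 * (Vmax * Real.exp (2 * Rmax) * s)
            + 32 * Real.sqrt 2 * (Vmax * Real.exp (2 * Rmax) * s)
            + 2 * Real.sqrt 2 * (Vmax * Real.exp (2 * Rmax) * s) := by
            rw [e4, hβCs, hT3a, hT3b]; ring
        _ ≤ 68 * Vmax * Real.exp (2 * Rmax) * s := by
            nlinarith [mul_le_mul_of_nonneg_right hsqrt2le hVE]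
    · rw [if_neg h]
      split_ifs
      · exact hwnn D
      · exact le_refl 0
end

section
/- Let X and A be finite nonempty sets, ρ a probability distribution on X, πref a reference policy with πref(a|x) > 0 for all x, a, η ≥ 0, and Π a finite nonempty set of policies. For a policy π define h_π(x) := Σ_a π(a|x)²/(πref(a|x) + η·π(a|x)), C_η^π := Σ_x ρ(x)·h_π(x), C₁^π := Σ_x ρ(x) Σ_a π(a|x)²/πref(a|x), and M_π := max_{x∈X} h_π(x). Let x₁,…,x_{n_x} be i.i.d. draws from ρ and Ĉ^π := (1/n_x)·Σ_{i=1}^{n_x} h_π(x_i). Then for every δ ∈ (0,1), with probability at least 1 − δ, for every π ∈ Π: |Ĉ^π − C_η^π| ≤ C₁^π/2 + 2·M_π·log(2|Π|/δ)/n_x. -/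
open scoped Classical

/-- Per-context smoothed χ² mass `h_π(x) = Σ_a π(a|x)²/(πref(a|x) + η·π(a|x))`. -/
noncomputable def hfun {X A : Type*} [Fintype A]
    (pref pol : X → A → ℝ) (η : ℝ) (x : X) : ℝ :=
  ∑ a, (pol x a) ^ 2 / (pref x a + η * pol x a)

lemma exp_le_quadratic {u : ℝ} (hu : |u| ≤ 1) : Real.exp u ≤ 1 + u + u ^ 2 := by
  have h := Real.exp_bound hu (n := 2) (by norm_num)
  have h2 : ∑ m ∈ Finset.range 2, u ^ m / (Nat.factorial m : ℝ) = 1 + u := by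
    simp [Finset.sum_range_succ, Nat.factorial]
  rw [h2] at h
  have habs := abs_le.mp h
  have hsq : |u| ^ 2 = u ^ 2 := sq_abs u
  have hcoef : ((Nat.succ 2 : ℕ) : ℝ) / ((Nat.factorial 2 : ℝ) * (2:ℕ)) = 3/4 := by
    norm_num [Nat.factorial]
  nlinarith [sq_nonneg u, habs.2]

lemma sum_pi_prod {X : Type*} [Fintype X] (n : ℕ) (f : X → ℝ) :
    ∑ D : Fin n → X, ∏ j, f (D j) = (∑ x, f x) ^ n := by
  have h := Finset.prod_univ_sum (fun _ : Fin n => (Finset.univ : Finset X)) (fun _ x => f x)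
  rw [Fintype.piFinset_univ] at h
  rw [← h, Finset.prod_const, Finset.card_univ, Fintype.card_fin]

lemma sum_prod_exp {X : Type*} [Fintype X] (ρ g : X → ℝ) (n : ℕ) (s : ℝ) :
    ∑ D : Fin n → X, (∏ j, ρ (D j)) * Real.exp (s * ∑ j, g (D j))
      = (∑ x, ρ x * Real.exp (s * g x)) ^ n := by
  rw [← sum_pi_prod n (fun x => ρ x * Real.exp (s * g x))]
  apply Finset.sum_congr rfl
  intro D _
  rw [Finset.prod_mul_distrib, Finset.mul_sum, Real.exp_sum]

lemma markov_exp {Ω : Type*} [Fintype Ω] (w f : Ω → ℝ) (hw : ∀ ω, 0 ≤ w ω)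
    (t s : ℝ) (hs : 0 ≤ s) :
    (∑ ω, if t ≤ f ω then w ω else 0)
      ≤ Real.exp (-(s * t)) * ∑ ω, w ω * Real.exp (s * f ω) := by
  rw [Finset.mul_sum]
  apply Finset.sum_le_sum
  intro ω _
  split_ifs with h
  · have h1 : (1:ℝ) ≤ Real.exp (-(s*t)) * Real.exp (s * f ω) := by
      rw [← Real.exp_add]
      have h2 : 0 ≤ -(s*t) + s * f ω := by nlinarith
      linarith [Real.add_one_le_exp (-(s*t) + s * f ω)]
    calc w ω = w ω * 1 := by ring
      _ ≤ w ω * (Real.exp (-(s*t)) * Real.exp (s * f ω)) :=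
          mul_le_mul_of_nonneg_left h1 (hw ω)
      _ = Real.exp (-(s*t)) * (w ω * Real.exp (s * f ω)) := by ring
  · exact mul_nonneg (Real.exp_pos _).le (mul_nonneg (hw ω) (Real.exp_pos _).le)

lemma tail_bound {X : Type*} [Fintype X] (ρ : X → ℝ) (hρ : ∀ x, 0 ≤ ρ x)
    (hρ1 : ∑ x, ρ x = 1) (Y : X → ℝ) (M : ℝ) (hM : 0 < M)
    (hY0 : ∑ x, ρ x * Y x = 0) (hYb : ∀ x, |Y x| ≤ M)
    (n : ℕ) (hn : 0 < n) (t L : ℝ) (hL : 0 < L)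
    (ht2 : 4 * (∑ x, ρ x * Y x ^ 2) * L ≤ (n : ℝ) * t ^ 2)
    (ht1 : 2 * M * L ≤ (n : ℝ) * t) :
    (∑ D : Fin n → X, if (n : ℝ) * t ≤ ∑ j, Y (D j) then ∏ j, ρ (D j) else 0)
      ≤ Real.exp (-L) := by
  set v : ℝ := ∑ x, ρ x * Y x ^ 2 with hvdef
  have hv0 : 0 ≤ v := Finset.sum_nonneg fun x _ => mul_nonneg (hρ x) (sq_nonneg _)
  have hnr : (0:ℝ) < n := Nat.cast_pos.mpr hn
  have ht : 0 < t := by nlinarith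
  obtain ⟨s, hs0, hsM, hsexp⟩ :
      ∃ s : ℝ, 0 ≤ s ∧ s * M ≤ 1 ∧ (n : ℝ) * (s ^ 2 * v - s * t) ≤ -L := by
    by_cases hcase : 2 * v ≤ t * M
    · refine ⟨1 / M, by positivity, by rw [one_div, inv_mul_cancel₀ hM.ne'], ?_⟩
      have hrew : (n:ℝ) * ((1/M)^2 * v - 1/M * t) = ((n:ℝ)*v - (n:ℝ)*(M*t))/M^2 := by
        field_simp
      rw [hrew, div_le_iff₀ (by positivity)]
      nlinarith [mul_le_mul_of_nonneg_left hcase hnr.le, mul_le_mul_of_nonneg_left ht1 hM.le]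
    · push_neg at hcase
      have hv0' : 0 < v := by nlinarith
      refine ⟨t / (2*v), by positivity, ?_, ?_⟩
      · rw [div_mul_eq_mul_div, div_le_one (by positivity)]; nlinarith
      · have hrew : (n:ℝ) * ((t/(2*v))^2 * v - (t/(2*v))*t) = -(((n:ℝ)*t^2)/(4*v)) := by
          field_simp; ring
        rw [hrew, neg_le_neg_iff, le_div_iff₀ (by positivity)]
        nlinarith
  have hmgf : ∑ x, ρ x * Real.exp (s * Y x) ≤ Real.exp (s^2 * v) := by
    have step : ∑ x, ρ x * Real.exp (s * Y x) ≤ ∑ x, ρ x * (1 + s * Y x + (s * Y x)^2) := by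
      apply Finset.sum_le_sum
      intro x _
      apply mul_le_mul_of_nonneg_left _ (hρ x)
      apply exp_le_quadratic
      rw [abs_mul, abs_of_nonneg hs0]
      calc s * |Y x| ≤ s * M := mul_le_mul_of_nonneg_left (hYb x) hs0
        _ ≤ 1 := hsM
    have expand : ∑ x, ρ x * (1 + s * Y x + (s * Y x)^2)
        = 1 + s^2 * v := by
      have e : ∀ x, ρ x * (1 + s * Y x + (s * Y x)^2)
          = ρ x + s * (ρ x * Y x) + s^2 * (ρ x * Y x ^ 2) := fun x => by ring
      simp_rw [e]
      rw [Finset.sum_add_distrib, Finset.sum_add_distrib, ← Finset.mul_sum, ← Finset.mul_sum,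
        hρ1, hY0, hvdef]
      ring
    calc ∑ x, ρ x * Real.exp (s * Y x) ≤ 1 + s^2 * v := by rw [← expand]; exact step
      _ ≤ Real.exp (s^2 * v) := by linarith [Real.add_one_le_exp (s^2*v)]
  have hbase : (0:ℝ) ≤ ∑ x, ρ x * Real.exp (s * Y x) :=
    Finset.sum_nonneg fun x _ => mul_nonneg (hρ x) (Real.exp_pos _).le
  calc (∑ D : Fin n → X, if (n : ℝ) * t ≤ ∑ j, Y (D j) then ∏ j, ρ (D j) else 0)
      ≤ Real.exp (-(s * ((n:ℝ) * t))) * ∑ D : Fin n → X, (∏ j, ρ (D j)) * Real.exp (s * ∑ j, Y (D j)) :=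
        markov_exp _ _ (fun D => Finset.prod_nonneg fun j _ => hρ (D j)) _ s hs0
    _ = Real.exp (-(s * ((n:ℝ) * t))) * (∑ x, ρ x * Real.exp (s * Y x)) ^ n := by
        rw [sum_prod_exp]
    _ ≤ Real.exp (-(s * ((n:ℝ) * t))) * (Real.exp (s^2 * v)) ^ n := by
        exact mul_le_mul_of_nonneg_left (pow_le_pow_left₀ hbase hmgf n) (Real.exp_pos _).le
    _ = Real.exp ((n:ℝ) * (s^2 * v - s * t)) := by
        rw [← Real.exp_nat_mul, ← Real.exp_add]
        congr 1; ring
    _ ≤ Real.exp (-L) := Real.exp_le_exp.mpr hsexp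

lemma two_tails {X : Type*} [Fintype X] (ρ : X → ℝ) (hρ : ∀ x, 0 ≤ ρ x)
    (hρ1 : ∑ x, ρ x = 1) (h : X → ℝ) (M C1 : ℝ) (hM : 0 < M)
    (hh0 : ∀ x, 0 ≤ h x) (hhM : ∀ x, h x ≤ M)
    (hμC1 : ∑ x, ρ x * h x ≤ C1) (hC10 : 0 ≤ C1)
    (nx : ℕ) (hnx : 0 < nx) (L : ℝ) (hL : 0 < L) :
    ((∑ D : Fin nx → X, if (nx:ℝ) * (C1/2 + 2*M*L/(nx:ℝ)) ≤ ∑ j, (h (D j) - ∑ x, ρ x * h x)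
        then ∏ j, ρ (D j) else 0) ≤ Real.exp (-L))
    ∧ ((∑ D : Fin nx → X, if (nx:ℝ) * (C1/2 + 2*M*L/(nx:ℝ)) ≤ ∑ j, ((∑ x, ρ x * h x) - h (D j))
        then ∏ j, ρ (D j) else 0) ≤ Real.exp (-L)) := by
  set μ : ℝ := ∑ x, ρ x * h x with hμdef
  set T : ℝ := C1/2 + 2*M*L/(nx:ℝ) with hTdef
  have hnr : (0:ℝ) < nx := Nat.cast_pos.mpr hnx
  have hμ0 : 0 ≤ μ := Finset.sum_nonneg fun x _ => mul_nonneg (hρ x) (hh0 x)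
  have hμM : μ ≤ M := by
    calc μ ≤ ∑ x, ρ x * M := Finset.sum_le_sum fun x _ => mul_le_mul_of_nonneg_left (hhM x) (hρ x)
      _ = M := by rw [← Finset.sum_mul, hρ1, one_mul]
  have hYb : ∀ x, |h x - μ| ≤ M := fun x =>
    abs_le.mpr ⟨by linarith [hh0 x], by linarith [hhM x]⟩
  have hY0 : ∑ x, ρ x * (h x - μ) = 0 := by
    simp_rw [mul_sub]
    rw [Finset.sum_sub_distrib, ← Finset.sum_mul, hρ1, one_mul, ← hμdef, sub_self]
  have hv1 : ∑ x, ρ x * (h x - μ)^2 ≤ M * C1 := by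
    have e : ∀ x : X, ρ x * (h x - μ)^2
        = ρ x * h x ^ 2 - 2*μ*(ρ x * h x) + μ^2 * ρ x := fun x => by ring
    have e1 : ∑ x, ρ x * (h x - μ)^2
        = (∑ x, ρ x * h x ^ 2) - 2*μ*μ + μ^2 := by
      simp_rw [e]
      rw [Finset.sum_add_distrib, Finset.sum_sub_distrib, ← Finset.mul_sum, ← Finset.mul_sum,
        hρ1, ← hμdef, mul_one]
    have e2 : ∑ x, ρ x * h x ^ 2 ≤ M * μ := by
      calc ∑ x, ρ x * h x ^ 2 ≤ ∑ x, ρ x * (M * h x) :=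
            Finset.sum_le_sum fun x _ => mul_le_mul_of_nonneg_left
              (by nlinarith [hh0 x, hhM x]) (hρ x)
        _ = M * μ := by rw [hμdef, Finset.mul_sum]; exact Finset.sum_congr rfl fun x _ => by ring
    nlinarith [sq_nonneg μ, mul_le_mul_of_nonneg_left hμC1 hM.le]
  have hT1 : 2*M*L ≤ (nx:ℝ) * T := by
    have e : (nx:ℝ) * T = (nx:ℝ)*C1/2 + 2*M*L := by
      rw [hTdef]; field_simp
    rw [e]
    nlinarith [mul_nonneg hnr.le hC10]
  have hT2 : ∀ v : ℝ, 0 ≤ v → v ≤ M * C1 → 4 * v * L ≤ (nx:ℝ) * T ^ 2 := by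
    intro v hv0 hvle
    have e : (nx:ℝ) * ((nx:ℝ) * T ^ 2) = ((nx:ℝ)*C1/2 + 2*M*L)^2 := by
      rw [hTdef]; field_simp
    have h2 : (nx:ℝ) * (4 * v * L) ≤ ((nx:ℝ)*C1/2 + 2*M*L)^2 := by
      nlinarith [sq_nonneg ((nx:ℝ)*C1/2 - 2*M*L),
        mul_le_mul_of_nonneg_right hvle hL.le, hnr, hv0, hL]
    rw [← e] at h2
    exact le_of_mul_le_mul_left h2 hnr
  constructor
  · exact tail_bound ρ hρ hρ1 (fun x => h x - μ) M hM hY0 hYb nx hnx T L hL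
      (hT2 _ (Finset.sum_nonneg fun x _ => mul_nonneg (hρ x) (sq_nonneg _)) hv1) hT1
  · have hY0' : ∑ x, ρ x * (μ - h x) = 0 := by
      have e : ∀ x : X, ρ x * (μ - h x) = -(ρ x * (h x - μ)) := fun x => by ring
      simp_rw [e, Finset.sum_neg_distrib, hY0, neg_zero]
    have hYb' : ∀ x, |μ - h x| ≤ M := fun x => by rw [abs_sub_comm]; exact hYb x
    have hv1' : ∑ x, ρ x * (μ - h x)^2 ≤ M * C1 := by
      have e : ∀ x : X, ρ x * (μ - h x)^2 = ρ x * (h x - μ)^2 := fun x => by ring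
      simp_rw [e]; exact hv1
    exact tail_bound ρ hρ hρ1 (fun x => μ - h x) M hM hY0' hYb' nx hnx T L hL
      (hT2 _ (Finset.sum_nonneg fun x _ => mul_nonneg (hρ x) (sq_nonneg _)) hv1') hT1


/-- Bernstein-type concentration of the empirical smoothed χ²-regularizer
(Lemma F.1): with probability at least `1 - δ` over `n_x` i.i.d. contexts from `ρ`,
simultaneously for all policies `π` in the finite class `Π`,
`|Ĉ^π − C_η^π| ≤ C₁^π/2 + 2·M_π·log(2|Π|/δ)/n_x`. -/
theorem smoothed_chi2_concentration
    {X A : Type*} [Fintype X] [Fintype A] [Nonempty X] [Nonempty A]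
    (ρ : X → ℝ) (hρ : ∀ x, 0 ≤ ρ x) (hρsum : ∑ x, ρ x = 1)
    (pref : X → A → ℝ) (hpref : ∀ x a, 0 < pref x a)
    (hprefsum : ∀ x, ∑ a, pref x a = 1)
    (η : ℝ) (hη : 0 ≤ η)
    (Pol : Finset (X → A → ℝ)) (hPolne : Pol.Nonempty)
    (hPolvalid : ∀ p ∈ Pol, (∀ x a, 0 ≤ p x a) ∧ ∀ x, ∑ a, p x a = 1)
    (nx : ℕ) (hnx : 0 < nx)
    (δ : ℝ) (hδ : δ ∈ Set.Ioo (0 : ℝ) 1) :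
    1 - δ ≤ ∑ Dx : Fin nx → X,
      if (∀ p ∈ Pol,
            |(1 / (nx : ℝ)) * (∑ j, hfun pref p η (Dx j))
                - ∑ x, ρ x * hfun pref p η x| ≤
              (∑ x, ρ x * ∑ a, (p x a) ^ 2 / pref x a) / 2 +
                2 * (Finset.univ.sup' Finset.univ_nonempty fun x : X => hfun pref p η x) *
                  Real.log (2 * (Pol.card : ℝ) / δ) / (nx : ℝ))
      then ∏ j, ρ (Dx j) else 0 := by
  classical
  obtain ⟨hδ0, hδ1⟩ := hδ
  have hnr : (0:ℝ) < nx := Nat.cast_pos.mpr hnx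
  have hK0 : 0 < Pol.card := Finset.card_pos.mpr hPolne
  have hKr : (1:ℝ) ≤ (Pol.card : ℝ) := by exact_mod_cast hK0
  set L : ℝ := Real.log (2 * (Pol.card : ℝ) / δ) with hLdef
  have hL : 0 < L := Real.log_pos (by rw [lt_div_iff₀ hδ0]; nlinarith)
  have hexpL : Real.exp (-L) = δ / (2 * (Pol.card : ℝ)) := by
    rw [hLdef, Real.exp_neg, Real.exp_log (by positivity), inv_div]
  -- abbreviations
  set h : (X → A → ℝ) → X → ℝ := fun p => hfun pref p η with hhdef
  set M : (X → A → ℝ) → ℝ :=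
    fun p => Finset.univ.sup' Finset.univ_nonempty fun x : X => hfun pref p η x with hMdef
  set C1 : (X → A → ℝ) → ℝ := fun p => ∑ x, ρ x * ∑ a, (p x a) ^ 2 / pref x a with hC1def
  set T : (X → A → ℝ) → ℝ := fun p => C1 p / 2 + 2 * M p * L / (nx:ℝ) with hTdef
  set μ : (X → A → ℝ) → ℝ := fun p => ∑ x, ρ x * hfun pref p η x with hμdef
  -- per-policy facts
  have hfacts : ∀ p ∈ Pol, (0 < M p) ∧ (∀ x, 0 ≤ h p x) ∧ (∀ x, h p x ≤ M p)
      ∧ (μ p ≤ C1 p) ∧ (0 ≤ C1 p) := by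
    intro p hp
    obtain ⟨hp0, hp1⟩ := hPolvalid p hp
    have hden : ∀ x a, 0 < pref x a + η * p x a := fun x a => by
      have := mul_nonneg hη (hp0 x a); linarith [hpref x a]
    have hh0 : ∀ x, 0 ≤ h p x := fun x =>
      Finset.sum_nonneg fun a _ => div_nonneg (sq_nonneg _) (hden x a).le
    have hhM : ∀ x, h p x ≤ M p := fun x => Finset.le_sup' _ (Finset.mem_univ x)
    have hM0 : 0 < M p := by
      obtain ⟨x⟩ := (inferInstance : Nonempty X)
      have hex : ∃ a, 0 < p x a := by
        by_contra hcon
        push_neg at hcon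
        have : ∑ a, p x a = 0 :=
          Finset.sum_eq_zero fun a _ => le_antisymm (hcon a) (hp0 x a)
        rw [hp1 x] at this; norm_num at this
      obtain ⟨a, ha⟩ := hex
      have hpos : 0 < h p x := Finset.sum_pos'
        (fun a _ => div_nonneg (sq_nonneg _) (hden x a).le)
        ⟨a, Finset.mem_univ a, div_pos (pow_pos ha 2) (hden x a)⟩
      exact lt_of_lt_of_le hpos (hhM x)
    have hμC1 : μ p ≤ C1 p := by
      apply Finset.sum_le_sum
      intro x _
      apply mul_le_mul_of_nonneg_left _ (hρ x)
      apply Finset.sum_le_sum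
      intro a _
      apply div_le_div_of_nonneg_left (sq_nonneg _) (hpref x a)
      nlinarith [mul_nonneg hη (hp0 x a)]
    have hC10 : 0 ≤ C1 p := Finset.sum_nonneg fun x _ => mul_nonneg (hρ x)
      (Finset.sum_nonneg fun a _ => div_nonneg (sq_nonneg _) (hpref x a).le)
    exact ⟨hM0, hh0, hhM, hμC1, hC10⟩
  -- total mass
  have hwsum : (∑ D : Fin nx → X, ∏ j, ρ (D j)) = 1 := by
    rw [sum_pi_prod, hρsum, one_pow]
  -- complement split
  rw [show (∑ Dx : Fin nx → X,
      if (∀ p ∈ Pol,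
            |(1 / (nx : ℝ)) * (∑ j, hfun pref p η (Dx j))
                - ∑ x, ρ x * hfun pref p η x| ≤
              (∑ x, ρ x * ∑ a, (p x a) ^ 2 / pref x a) / 2 +
                2 * (Finset.univ.sup' Finset.univ_nonempty fun x : X => hfun pref p η x) *
                  Real.log (2 * (Pol.card : ℝ) / δ) / (nx : ℝ))
      then ∏ j, ρ (Dx j) else 0)
      = 1 - ∑ Dx : Fin nx → X,
      if (∀ p ∈ Pol,
            |(1 / (nx : ℝ)) * (∑ j, hfun pref p η (Dx j))
                - ∑ x, ρ x * hfun pref p η x| ≤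
              (∑ x, ρ x * ∑ a, (p x a) ^ 2 / pref x a) / 2 +
                2 * (Finset.univ.sup' Finset.univ_nonempty fun x : X => hfun pref p η x) *
                  Real.log (2 * (Pol.card : ℝ) / δ) / (nx : ℝ))
      then 0 else ∏ j, ρ (Dx j) from by
    rw [eq_sub_iff_add_eq, ← Finset.sum_add_distrib, ← hwsum]
    exact Finset.sum_congr rfl fun D _ => by split_ifs <;> simp]
  apply sub_le_sub_left
  -- bad event bound
  have hw0 : ∀ D : Fin nx → X, 0 ≤ ∏ j, ρ (D j) :=
    fun D => Finset.prod_nonneg fun j _ => hρ (D j)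
  have hB : ∀ p ∈ Pol,
      ((∑ D : Fin nx → X, if (nx:ℝ) * T p ≤ ∑ j, (h p (D j) - μ p)
          then ∏ j, ρ (D j) else 0) ≤ Real.exp (-L))
      ∧ ((∑ D : Fin nx → X, if (nx:ℝ) * T p ≤ ∑ j, (μ p - h p (D j))
          then ∏ j, ρ (D j) else 0) ≤ Real.exp (-L)) := by
    intro p hp
    obtain ⟨hM0, hh0, hhM, hμC1, hC10⟩ := hfacts p hp
    exact two_tails ρ hρ hρsum (h p) (M p) (C1 p) hM0 hh0 hhM hμC1 hC10 nx hnx L hL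
  have hpoint : ∀ Dx : Fin nx → X,
      (if (∀ p ∈ Pol,
            |(1 / (nx : ℝ)) * (∑ j, hfun pref p η (Dx j))
                - ∑ x, ρ x * hfun pref p η x| ≤
              (∑ x, ρ x * ∑ a, (p x a) ^ 2 / pref x a) / 2 +
                2 * (Finset.univ.sup' Finset.univ_nonempty fun x : X => hfun pref p η x) *
                  L / (nx : ℝ))
        then (0:ℝ) else ∏ j, ρ (Dx j))
      ≤ ∑ p ∈ Pol,
          ((if (nx:ℝ) * T p ≤ ∑ j, (h p (Dx j) - μ p) then ∏ j, ρ (Dx j) else 0)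
          + (if (nx:ℝ) * T p ≤ ∑ j, (μ p - h p (Dx j)) then ∏ j, ρ (Dx j) else 0)) := by
    intro Dx
    have hterm0 : ∀ (c : Prop) [Decidable c],
        (0:ℝ) ≤ if c then ∏ j, ρ (Dx j) else 0 := by
      intro c _; split_ifs; exacts [hw0 Dx, le_rfl]
    split_ifs with hE
    · exact Finset.sum_nonneg fun q _ => add_nonneg (hterm0 _) (hterm0 _)
    · push_neg at hE
      obtain ⟨p, hp, hgt⟩ := hE
      have hgt' : T p < |(1 / (nx : ℝ)) * (∑ j, hfun pref p η (Dx j)) - μ p| := hgt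
      have hsum : ∀ c : ℝ, ∑ _j : Fin nx, c = (nx:ℝ) * c := fun c => by
        rw [Finset.sum_const, Finset.card_univ, Fintype.card_fin, nsmul_eq_mul]
      have hS : ∑ j, h p (Dx j) = ∑ j, hfun pref p η (Dx j) := rfl
      have key : ∏ j, ρ (Dx j)
          ≤ (if (nx:ℝ) * T p ≤ ∑ j, (h p (Dx j) - μ p) then ∏ j, ρ (Dx j) else 0)
          + (if (nx:ℝ) * T p ≤ ∑ j, (μ p - h p (Dx j)) then ∏ j, ρ (Dx j) else 0) := by
        rcases lt_abs.mp hgt' with hc | hc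
        · have hz := (mul_lt_mul_iff_right₀ hnr).mpr hc
          have he : (nx:ℝ) * ((1/(nx:ℝ)) * (∑ j, hfun pref p η (Dx j)) - μ p)
              = ∑ j, (h p (Dx j) - μ p) := by
            rw [Finset.sum_sub_distrib, hsum (μ p), hS]
            field_simp
          rw [he] at hz
          rw [if_pos hz.le]
          linarith [hterm0 ((nx:ℝ) * T p ≤ ∑ j, (μ p - h p (Dx j)))]
        · have hz := (mul_lt_mul_iff_right₀ hnr).mpr hc
          have he : (nx:ℝ) * (-((1/(nx:ℝ)) * (∑ j, hfun pref p η (Dx j)) - μ p))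
              = ∑ j, (μ p - h p (Dx j)) := by
            rw [Finset.sum_sub_distrib, hsum (μ p), hS]
            field_simp
            ring
          rw [he] at hz
          rw [if_pos hz.le]
          linarith [hterm0 ((nx:ℝ) * T p ≤ ∑ j, (h p (Dx j) - μ p))]
      refine le_trans key (Finset.single_le_sum
        (f := fun q => (if (nx:ℝ) * T q ≤ ∑ j, (h q (Dx j) - μ q) then ∏ j, ρ (Dx j) else 0)
          + (if (nx:ℝ) * T q ≤ ∑ j, (μ q - h q (Dx j)) then ∏ j, ρ (Dx j) else 0))
        (fun q _ => add_nonneg (hterm0 _) (hterm0 _)) hp)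
  calc (∑ Dx : Fin nx → X,
      if (∀ p ∈ Pol,
            |(1 / (nx : ℝ)) * (∑ j, hfun pref p η (Dx j))
                - ∑ x, ρ x * hfun pref p η x| ≤
              (∑ x, ρ x * ∑ a, (p x a) ^ 2 / pref x a) / 2 +
                2 * (Finset.univ.sup' Finset.univ_nonempty fun x : X => hfun pref p η x) *
                  L / (nx : ℝ))
      then (0:ℝ) else ∏ j, ρ (Dx j))
      ≤ ∑ Dx : Fin nx → X, ∑ p ∈ Pol,
          ((if (nx:ℝ) * T p ≤ ∑ j, (h p (Dx j) - μ p) then ∏ j, ρ (Dx j) else 0)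
          + (if (nx:ℝ) * T p ≤ ∑ j, (μ p - h p (Dx j)) then ∏ j, ρ (Dx j) else 0)) :=
        Finset.sum_le_sum fun Dx _ => hpoint Dx
    _ = ∑ p ∈ Pol, ∑ Dx : Fin nx → X,
          ((if (nx:ℝ) * T p ≤ ∑ j, (h p (Dx j) - μ p) then ∏ j, ρ (Dx j) else 0)
          + (if (nx:ℝ) * T p ≤ ∑ j, (μ p - h p (Dx j)) then ∏ j, ρ (Dx j) else 0)) :=
        Finset.sum_comm
    _ = ∑ p ∈ Pol,
          ((∑ Dx : Fin nx → X, if (nx:ℝ) * T p ≤ ∑ j, (h p (Dx j) - μ p)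
              then ∏ j, ρ (Dx j) else 0)
          + ∑ Dx : Fin nx → X, if (nx:ℝ) * T p ≤ ∑ j, (μ p - h p (Dx j))
              then ∏ j, ρ (Dx j) else 0) :=
        Finset.sum_congr rfl fun p _ => Finset.sum_add_distrib
    _ ≤ ∑ _p ∈ Pol, (Real.exp (-L) + Real.exp (-L)) :=
        Finset.sum_le_sum fun p hp => add_le_add (hB p hp).1 (hB p hp).2
    _ = (Pol.card : ℝ) * (2 * Real.exp (-L)) := by
        rw [Finset.sum_const, nsmul_eq_mul]; ring
    _ = δ := by
        rw [hexpL]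
        have hKne : (Pol.card : ℝ) ≠ 0 := by positivity
        field_simp
end

section
/- For every probability vector π = (π₁, π₂, π₃, π₄) ∈ ℝ⁴ (πᵢ ≥ 0, π₁+π₂+π₃+π₄ = 1), there exist probability vectors q, q′ ∈ ℝ⁴ such that 2·( q₄·(π₂ − π₃) − π₄·(q₂ − q₃) ) + 2·( q′₄·(π₁ + π₃) − π₄·(q′₁ + q′₃) ) ≥ 1/2. Equivalently, the sum of the two duality gaps DG(π; ℓ¹) + DG(π; ℓ²) is at least 1/2 for every policy π, where DG(π; ℓ) := max_{q∈Δ₄} Σ_{i,j} q_i π_j ℓ(i,j) taken together with the skew-symmetric preference functions ℓ¹, ℓ² on {1,2,3,4} given by ℓ¹(2,4) = −1, ℓ¹(3,4) = 1, ℓ²(1,4) = −1, ℓ²(3,4) = −1, all other unordered pairs among {1,2,3} and diagonal values being 0 and the remaining values determined by skew-symmetry ℓ(i,j) = −ℓ(j,i). -/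
/-- Key claim of the lower bound for general preference models: for every probability
vector `π` on `{1,2,3,4}` (0-indexed as `Fin 4`), there exist probability vectors `q, q′`
witnessing that the sum of the two duality gaps is at least `1/2`:
`2(q₄(π₂ − π₃) − π₄(q₂ − q₃)) + 2(q′₄(π₁ + π₃) − π₄(q′₁ + q′₃)) ≥ 1/2`. -/
theorem duality_gap_sum_lower_bound (π : Fin 4 → ℝ)
    (hπ : ∀ i, 0 ≤ π i) (hsum : ∑ i, π i = 1) :
    ∃ q q' : Fin 4 → ℝ,
      (∀ i, 0 ≤ q i) ∧ (∑ i, q i = 1) ∧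
      (∀ i, 0 ≤ q' i) ∧ (∑ i, q' i = 1) ∧
      1 / 2 ≤ 2 * (q 3 * (π 1 - π 2) - π 3 * (q 1 - q 2)) +
        2 * (q' 3 * (π 0 + π 2) - π 3 * (q' 0 + q' 2)) := by
  rw [Fin.sum_univ_four] at hsum
  have h0 := hπ 0; have h1 := hπ 1; have h2 := hπ 2; have h3 := hπ 3
  rcases le_or_gt (1/4 : ℝ) (π 1) with h | h
  · refine ⟨(fun i => if i = 3 then 1 else 0), (fun i => if i = 3 then 1 else 0),
      ?_, ?_, ?_, ?_, ?_⟩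
    · intro i; positivity
    · simp [Fin.sum_univ_four]
    · intro i; positivity
    · simp [Fin.sum_univ_four]
    · simp only [Fin.ext_iff, show ((1:Fin 4)=3)=False by decide, show ((2:Fin 4)=3)=False by decide, show ((0:Fin 4)=3)=False by decide, show ((3:Fin 4)=2)=False by decide, show ((1:Fin 4)=2)=False by decide, if_false, if_true]; norm_num; linarith
  · refine ⟨(fun i => if i = 2 then 1 else 0), (fun i => if i = 3 then 1 else 0),
      ?_, ?_, ?_, ?_, ?_⟩
    · intro i; positivity
    · simp [Fin.sum_univ_four]
    · intro i; positivity
    · simp [Fin.sum_univ_four]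
    · simp only [Fin.ext_iff, show ((1:Fin 4)=3)=False by decide, show ((2:Fin 4)=3)=False by decide, show ((0:Fin 4)=3)=False by decide, show ((3:Fin 4)=2)=False by decide, show ((1:Fin 4)=2)=False by decide, if_false, if_true]; norm_num; linarith
end
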